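/- arXiv:2303.02783 — 4 statements merged into one kernel-verified Lean document; each statement's English description precedes it below -/
import Mathlib

section
/- Fix ρ > 0, H ≥ 1, P° ∈ Δ(S), and let 𝒫 = {P ∈ Δ(S) : D_KL(P, P°) ≤ ρ} be the Kullback–Leibler ball of radius ρ around P°. Then for any V : S → ℝ with 0 ≤ V(s) ≤ H for all s, L_𝒫 V = − inf_{λ ∈ [0, H/ρ]} { λρ + λ log E_{s'∼P°}[exp(−V(s')/λ)] }, where the expression at λ = 0 is interpreted as its limiting value min{ V(s') : s' ∈ S, P°(s') > 0 }. -/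
/-- The probability simplex over a finite set `S`. -/
def isSimplex {S : Type*} [Fintype S] (P : S → ℝ) : Prop :=
  (∀ s, 0 ≤ P s) ∧ ∑ s, P s = 1

/-- Robust support operator `L_𝒫 V = inf {PV : P ∈ 𝒫}`. -/
noncomputable def Lrob {S : Type*} [Fintype S] (U : Set (S → ℝ)) (V : S → ℝ) : ℝ :=
  sInf {x | ∃ P ∈ U, x = ∑ s, P s * V s}

/-- Kullback–Leibler divergence (with `0 · log 0 = 0`; absolute continuity imposed
separately, matching the `+∞` convention). -/
noncomputable def Dkl {S : Type*} [Fintype S] (P Q : S → ℝ) : ℝ :=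
  ∑ s, P s * Real.log (P s / Q s)

section helpers
variable {S : Type*} [Fintype S]

lemma dkl_nonneg (P Q : S → ℝ) (hP : isSimplex P) (hQ : isSimplex Q)
    (hac : ∀ s, Q s = 0 → P s = 0) : 0 ≤ Dkl P Q := by
  have h : ∀ s, P s - Q s ≤ P s * Real.log (P s / Q s) := by
    intro s
    rcases eq_or_lt_of_le (hP.1 s) with h0 | hpos
    · simp only [← h0, zero_mul, zero_sub, neg_nonpos]
      exact hQ.1 s
    · have hq : 0 < Q s := by
        rcases eq_or_lt_of_le (hQ.1 s) with h0' | h; · exact absurd (hac s h0'.symm) (by linarith)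
        · exact h
      have hx : 0 < Q s / P s := div_pos hq hpos
      have h1 := Real.log_le_sub_one_of_pos hx
      have hlog : Real.log (Q s / P s) = - Real.log (P s / Q s) := by
        rw [← Real.log_inv, inv_div]
      rw [hlog] at h1
      have h2 : P s * (Q s / P s - 1) = Q s - P s := by field_simp
      nlinarith
  have hs : ∑ s, (P s - Q s) ≤ ∑ s, P s * Real.log (P s / Q s) :=
    Finset.sum_le_sum (fun s _ => h s)
  unfold Dkl
  rw [Finset.sum_sub_distrib, hP.2, hQ.2] at hs
  linarith
end helpers

section helpers2
variable {S : Type*} [Fintype S]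

lemma exists_pos (Po : S → ℝ) (hPo : isSimplex Po) : ∃ s, 0 < Po s := by
  by_contra h
  push_neg at h
  have : ∑ s, Po s ≤ 0 := Finset.sum_nonpos (fun s _ => h s)
  rw [hPo.2] at this; linarith

lemma Z_pos (Po V : S → ℝ) (l : ℝ) (hPo : isSimplex Po) :
    0 < ∑ s, Po s * Real.exp (-V s / l) := by
  obtain ⟨s0, hs0⟩ := exists_pos Po hPo
  exact Finset.sum_pos' (fun s _ => mul_nonneg (hPo.1 s) (Real.exp_pos _).le)
    ⟨s0, Finset.mem_univ _, mul_pos hs0 (Real.exp_pos _)⟩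

lemma weak_dual (Po V P : S → ℝ) (ρ l : ℝ) (hl : 0 < l)
    (hPo : isSimplex Po) (hP : isSimplex P) (hac : ∀ s, Po s = 0 → P s = 0)
    (hd : Dkl P Po ≤ ρ) :
    -(l * ρ + l * Real.log (∑ s, Po s * Real.exp (-V s / l))) ≤ ∑ s, P s * V s := by
  set Z := ∑ s, Po s * Real.exp (-V s / l) with hZdef
  have hZpos : 0 < Z := Z_pos Po V l hPo
  have key : ∑ s, P s * Real.log ((Po s * Real.exp (-V s / l)) / (Z * P s)) ≤ 0 := by
    have hb : ∀ s, P s * Real.log ((Po s * Real.exp (-V s / l)) / (Z * P s)) ≤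
        Po s * Real.exp (-V s / l) / Z - P s := by
      intro s
      rcases eq_or_lt_of_le (hP.1 s) with h0 | hpos
      · rw [← h0]
        simp only [zero_mul, sub_zero]
        exact div_nonneg (mul_nonneg (hPo.1 s) (Real.exp_pos _).le) hZpos.le
      · have hpo : 0 < Po s :=
          lt_of_le_of_ne (hPo.1 s) (fun h => absurd (hac s h.symm) (ne_of_gt hpos))
        have hx : 0 < (Po s * Real.exp (-V s / l)) / (Z * P s) := div_pos (mul_pos hpo (Real.exp_pos _)) (mul_pos hZpos hpos)
        have h1 := Real.log_le_sub_one_of_pos hx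
        have h2 : P s * ((Po s * Real.exp (-V s / l)) / (Z * P s) - 1)
            = Po s * Real.exp (-V s / l) / Z - P s := by
          field_simp
        nlinarith
    have hsum : ∑ s, P s * Real.log ((Po s * Real.exp (-V s / l)) / (Z * P s)) ≤
        ∑ s, (Po s * Real.exp (-V s / l) / Z - P s) := Finset.sum_le_sum (fun s _ => hb s)
    have : ∑ s, (Po s * Real.exp (-V s / l) / Z - P s) = 0 := by
      rw [Finset.sum_sub_distrib, ← Finset.sum_div, hP.2, ← hZdef, div_self (ne_of_gt hZpos)]
      ring
    linarith
  have expand : ∑ s, P s * Real.log ((Po s * Real.exp (-V s / l)) / (Z * P s))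
      = -Dkl P Po - (∑ s, P s * V s) / l - Real.log Z := by
    have hterm : ∀ s, P s * Real.log ((Po s * Real.exp (-V s / l)) / (Z * P s))
        = -(P s * Real.log (P s / Po s)) - P s * V s / l - P s * Real.log Z := by
      intro s
      rcases eq_or_lt_of_le (hP.1 s) with h0 | hpos
      · rw [← h0]; ring
      · have hpo : 0 < Po s :=
          lt_of_le_of_ne (hPo.1 s) (fun h => absurd (hac s h.symm) (ne_of_gt hpos))
        have he : (0:ℝ) < Real.exp (-V s / l) := Real.exp_pos _
        rw [Real.log_div (by positivity) (by positivity), Real.log_mul (ne_of_gt hpo) (ne_of_gt he),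
          Real.log_mul (ne_of_gt hZpos) (ne_of_gt hpos), Real.log_exp,
          Real.log_div (ne_of_gt hpos) (ne_of_gt hpo)]
        ring
    rw [Finset.sum_congr rfl (fun s _ => hterm s)]
    rw [Finset.sum_sub_distrib, Finset.sum_sub_distrib, Finset.sum_neg_distrib,
      ← Finset.sum_div, ← Finset.sum_mul, hP.2, one_mul]
    rfl
  rw [expand] at key
  have h3 : (-(Dkl P Po) - Real.log Z) * l ≤ ∑ s, P s * V s := by
    rw [← le_div_iff₀ hl]; linarith
  nlinarith [mul_nonneg hl.le (sub_nonneg.mpr hd)]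
end helpers2

section gibbs
variable {S : Type*} [Fintype S]

noncomputable def Zf (Po V : S → ℝ) (l : ℝ) : ℝ := ∑ s, Po s * Real.exp (-V s / l)
noncomputable def Nf (Po V : S → ℝ) (l : ℝ) : ℝ := ∑ s, Po s * Real.exp (-V s / l) * V s
noncomputable def Gf (Po V : S → ℝ) (l : ℝ) (s : S) : ℝ :=
  Po s * Real.exp (-V s / l) / Zf Po V l
noncomputable def phifn (Po V : S → ℝ) (l : ℝ) : ℝ :=
  -(Nf Po V l / Zf Po V l) / l - Real.log (Zf Po V l)

lemma Zf_pos (Po V : S → ℝ) (l : ℝ) (hPo : isSimplex Po) : 0 < Zf Po V l :=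
  Z_pos Po V l hPo

lemma Gf_simplex (Po V : S → ℝ) (l : ℝ) (hPo : isSimplex Po) : isSimplex (Gf Po V l) := by
  have hZ := Zf_pos Po V l hPo
  constructor
  · intro s
    exact div_nonneg (mul_nonneg (hPo.1 s) (Real.exp_pos _).le) hZ.le
  · unfold Gf
    rw [← Finset.sum_div]
    exact div_self (ne_of_gt hZ)

lemma Gf_ac (Po V : S → ℝ) (l : ℝ) (s : S) (h : Po s = 0) : Gf Po V l s = 0 := by
  simp [Gf, h]

lemma sum_Gf_V (Po V : S → ℝ) (l : ℝ) :
    ∑ s, Gf Po V l s * V s = Nf Po V l / Zf Po V l := by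
  unfold Gf Nf
  rw [Finset.sum_div]
  exact Finset.sum_congr rfl (fun s _ => by ring)

lemma dkl_Gf (Po V : S → ℝ) (l : ℝ) (hPo : isSimplex Po) :
    Dkl (Gf Po V l) Po = phifn Po V l := by
  have hZ := Zf_pos Po V l hPo
  have hterm : ∀ s, Gf Po V l s * Real.log (Gf Po V l s / Po s)
      = Gf Po V l s * (-V s / l) - Gf Po V l s * Real.log (Zf Po V l) := by
    intro s
    rcases eq_or_lt_of_le (hPo.1 s) with h0 | hpos
    · rw [Gf_ac Po V l s h0.symm]; ring
    · have : Gf Po V l s / Po s = Real.exp (-V s / l) / Zf Po V l := by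
        unfold Gf
        field_simp
      rw [this, Real.log_div (ne_of_gt (Real.exp_pos _)) (ne_of_gt hZ), Real.log_exp]
      ring
  unfold Dkl
  rw [Finset.sum_congr rfl (fun s _ => hterm s), Finset.sum_sub_distrib]
  have h1 : ∑ s, Gf Po V l s * (-V s / l) = -(Nf Po V l / Zf Po V l) / l := by
    rw [← sum_Gf_V Po V l, ← Finset.sum_neg_distrib, Finset.sum_div]
    exact Finset.sum_congr rfl (fun s _ => by ring)
  have h2 : ∑ s, Gf Po V l s * Real.log (Zf Po V l) = Real.log (Zf Po V l) := by
    rw [← Finset.sum_mul, (Gf_simplex Po V l hPo).2, one_mul]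
  rw [h1, h2]
  rfl

lemma Zf_le_exp (Po V : S → ℝ) (m l : ℝ) (hl : 0 < l) (hPo : isSimplex Po)
    (hm : ∀ s, 0 < Po s → m ≤ V s) : Zf Po V l ≤ Real.exp (-m / l) := by
  have hb : ∀ s, Po s * Real.exp (-V s / l) ≤ Po s * Real.exp (-m / l) := by
    intro s
    rcases eq_or_lt_of_le (hPo.1 s) with h0 | hpos
    · rw [← h0]; simp
    · refine mul_le_mul_of_nonneg_left (Real.exp_le_exp.mpr ?_) hpos.le
      have := hm s hpos
      gcongr

  calc Zf Po V l ≤ ∑ s, Po s * Real.exp (-m / l) := Finset.sum_le_sum (fun s _ => hb s)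
    _ = Real.exp (-m / l) := by rw [← Finset.sum_mul, hPo.2, one_mul]

lemma Zf_ge_exp (Po V : S → ℝ) (H l : ℝ) (hl : 0 < l) (hPo : isSimplex Po)
    (hH : ∀ s, V s ≤ H) : Real.exp (-H / l) ≤ Zf Po V l := by
  have hb : ∀ s, Po s * Real.exp (-H / l) ≤ Po s * Real.exp (-V s / l) := by
    intro s
    refine mul_le_mul_of_nonneg_left (Real.exp_le_exp.mpr ?_) (hPo.1 s)
    have := hH s
    gcongr

  calc Real.exp (-H / l) = ∑ s, Po s * Real.exp (-H / l) := by
        rw [← Finset.sum_mul, hPo.2, one_mul]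
    _ ≤ Zf Po V l := Finset.sum_le_sum (fun s _ => hb s)

lemma Zf_ge_single (Po V : S → ℝ) (l : ℝ) (s0 : S) (hPo : isSimplex Po) :
    Po s0 * Real.exp (-V s0 / l) ≤ Zf Po V l :=
  Finset.single_le_sum (f := fun s => Po s * Real.exp (-V s / l))
    (fun s _ => mul_nonneg (hPo.1 s) (Real.exp_pos _).le)
    (Finset.mem_univ s0)

lemma phifn_contOn (Po V : S → ℝ) (hPo : isSimplex Po) :
    ContinuousOn (phifn Po V) (Set.Ioi (0:ℝ)) := by
  have hZc : ContinuousOn (Zf Po V) (Set.Ioi (0:ℝ)) := by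
    apply continuousOn_finset_sum
    intro s _
    exact continuousOn_const.mul (Real.continuous_exp.comp_continuousOn
      (continuousOn_const.div continuousOn_id (fun l hl => ne_of_gt hl)))
  have hNc : ContinuousOn (Nf Po V) (Set.Ioi (0:ℝ)) := by
    apply continuousOn_finset_sum
    intro s _
    exact (continuousOn_const.mul (Real.continuous_exp.comp_continuousOn
      (continuousOn_const.div continuousOn_id (fun l hl => ne_of_gt hl)))).mul continuousOn_const
  have hZne : ∀ l ∈ Set.Ioi (0:ℝ), Zf Po V l ≠ 0 := fun l _ => ne_of_gt (Zf_pos Po V l hPo)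
  exact (((hNc.div hZc hZne).neg.div continuousOn_id (fun l hl => ne_of_gt hl)).sub
    (hZc.log hZne))

end gibbs

lemma dkl_self {S : Type*} [Fintype S] (Po : S → ℝ) : Dkl Po Po = 0 := by
  unfold Dkl
  apply Finset.sum_eq_zero
  intro s _
  by_cases h : Po s = 0
  · simp [h]
  · rw [div_self h, Real.log_one, mul_zero]

theorem stmt5 {S : Type*} [Fintype S] [Nonempty S]
    (ρ H : ℝ) (hρ : 0 < ρ) (hH : 1 ≤ H)
    (Po : S → ℝ) (hPo : isSimplex Po)
    (V : S → ℝ) (hV : ∀ s, V s ∈ Set.Icc (0:ℝ) H) :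
    Lrob {P | isSimplex P ∧ (∀ s, Po s = 0 → P s = 0) ∧ Dkl P Po ≤ ρ} V =
      - sInf ((fun lam =>
          if lam = 0 then sInf {y | ∃ s', 0 < Po s' ∧ y = V s'}
          else lam * ρ + lam * Real.log (∑ s', Po s' * Real.exp (-(V s') / lam))) ''
        Set.Icc 0 (H / ρ)) := by
  have hH0 : (0:ℝ) < H := lt_of_lt_of_le one_pos hH
  set lmax := H / ρ with hlmaxdef
  have hlmax : 0 < lmax := div_pos hH0 hρ
  set ball := {P : S → ℝ | isSimplex P ∧ (∀ s, Po s = 0 → P s = 0) ∧ Dkl P Po ≤ ρ} with hballdef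
  set X := {x | ∃ P ∈ ball, x = ∑ s, P s * V s} with hXdef
  set f : ℝ → ℝ := fun lam =>
      if lam = 0 then sInf {y | ∃ s', 0 < Po s' ∧ y = V s'}
      else lam * ρ + lam * Real.log (∑ s', Po s' * Real.exp (-(V s') / lam)) with hfdef
  set F := f '' Set.Icc 0 lmax with hFdef
  -- the minimum of V on the support of Po
  set T : Finset S := Finset.univ.filter (fun s => 0 < Po s) with hTdef
  have hT : T.Nonempty := by
    obtain ⟨s0, hs0⟩ := exists_pos Po hPo
    exact ⟨s0, by simp [hTdef, hs0]⟩
  set m := T.inf' hT V with hmdef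
  obtain ⟨sm, hsmT, hsmV⟩ := Finset.exists_mem_eq_inf' hT V
  have hsm : 0 < Po sm := by simpa [hTdef] using hsmT
  have hm_le : ∀ s, 0 < Po s → m ≤ V s := by
    intro s hs
    exact Finset.inf'_le V (by simp [hTdef, hs])
  have hmVsm : m = V sm := hmdef.trans hsmV
  have hm0 : 0 ≤ m := by rw [hmVsm]; exact (hV sm).1
  have hmset : sInf {y | ∃ s', 0 < Po s' ∧ y = V s'} = m := by
    apply le_antisymm
    · exact csInf_le ⟨m, fun y ⟨s', hs', hy⟩ => hy ▸ hm_le s' hs'⟩ ⟨sm, hsm, hmVsm⟩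
    · exact le_csInf ⟨V sm, sm, hsm, rfl⟩ (fun y ⟨s', hs', hy⟩ => hy ▸ hm_le s' hs')
  -- facts about X
  have hXne : X.Nonempty := by
    refine ⟨∑ s, Po s * V s, Po, ?_, rfl⟩
    exact ⟨hPo, fun s h => h, by rw [dkl_self]; exact hρ.le⟩
  have hX0 : ∀ x ∈ X, 0 ≤ x := by
    rintro x ⟨P, hP, rfl⟩
    exact Finset.sum_nonneg (fun s _ => mul_nonneg (hP.1.1 s) (hV s).1)
  have hXm : ∀ x ∈ X, m ≤ x := by
    rintro x ⟨P, hP, rfl⟩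
    have : ∀ s, P s * m ≤ P s * V s := by
      intro s
      by_cases h : Po s = 0
      · rw [hP.2.1 s h]; simp
      · have : 0 < Po s := lt_of_le_of_ne (hPo.1 s) (Ne.symm h)
        exact mul_le_mul_of_nonneg_left (hm_le s this) (hP.1.1 s)
    calc m = ∑ s, P s * m := by rw [← Finset.sum_mul, hP.1.2, one_mul]
      _ ≤ ∑ s, P s * V s := Finset.sum_le_sum (fun s _ => this s)
  have hXbdd : BddBelow X := ⟨0, hX0⟩
  set L := sInf X with hLdef
  have hL0 : 0 ≤ L := le_csInf hXne hX0
  have hLm : m ≤ L := le_csInf hXne hXm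
  -- weak duality
  have wd : ∀ l : ℝ, 0 < l → -(l * ρ + l * Real.log (Zf Po V l)) ≤ L := by
    intro l hl
    refine le_csInf hXne ?_
    rintro x ⟨P, hP, rfl⟩
    exact weak_dual Po V P ρ l hl hPo hP.1 hP.2.1 hP.2.2
  -- φ at lmax is at most ρ
  have hφmax : phifn Po V lmax ≤ ρ := by
    have hN : 0 ≤ Nf Po V lmax := Finset.sum_nonneg (fun s _ =>
      mul_nonneg (mul_nonneg (hPo.1 s) (Real.exp_pos _).le) (hV s).1)
    have hZ := Zf_pos Po V lmax hPo
    have hZge := Zf_ge_exp Po V H lmax hlmax hPo (fun s => (hV s).2)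
    have hlog : -H / lmax ≤ Real.log (Zf Po V lmax) := by
      have := Real.log_le_log (Real.exp_pos _) hZge
      rwa [Real.log_exp] at this
    have hdiv : 0 ≤ (Nf Po V lmax / Zf Po V lmax) / lmax :=
      div_nonneg (div_nonneg hN hZ.le) hlmax.le
    have hHl : H / lmax = ρ := by
      rw [hlmaxdef]; field_simp
    unfold phifn
    have hne1 : -(Nf Po V lmax / Zf Po V lmax) / lmax
        = -(Nf Po V lmax / Zf Po V lmax / lmax) := by ring
    have hne2 : -H / lmax = -(H / lmax) := by ring
    linarith
  -- membership of Gibbs measures in the ball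
  have hGX : ∀ l : ℝ, 0 < l → Dkl (Gf Po V l) Po ≤ ρ → (∑ s, Gf Po V l s * V s) ∈ X :=
    fun l hl hd => ⟨Gf Po V l, ⟨Gf_simplex Po V l hPo, fun s h => Gf_ac Po V l s h, hd⟩, rfl⟩
  -- lower bound for F
  have lbF : ∀ y ∈ F, -L ≤ y := by
    rintro y ⟨lam, hlam, rfl⟩
    by_cases h : lam = 0
    · simp only [hfdef, h, if_pos]
      rw [hmset]
      linarith
    · have hl : 0 < lam := lt_of_le_of_ne hlam.1 (Ne.symm h)
      simp only [hfdef, if_neg h]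
      have := wd lam hl
      unfold Zf at this
      linarith
  have hFne : F.Nonempty := ⟨f 0, 0, ⟨le_refl 0, hlmax.le⟩, rfl⟩
  have hFbdd : BddBelow F := ⟨-L, lbF⟩
  have hlow : -L ≤ sInf F := le_csInf hFne lbF
  -- upper bound
  have hup : sInf F ≤ -L := by
    by_cases hcase : ∃ l ∈ Set.Ioc (0:ℝ) lmax, ρ ≤ phifn Po V l
    · -- case A : exact dual attainment
      obtain ⟨l0, hl0, hρl0⟩ := hcase
      have hsub : Set.Icc l0 lmax ⊆ Set.Ioi 0 := fun x hx => lt_of_lt_of_le hl0.1 hx.1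
      have hcont := (phifn_contOn Po V hPo).mono hsub
      have hivt := intermediate_value_Icc' hl0.2 hcont
      obtain ⟨ls, hls_mem, hφs⟩ := hivt ⟨hφmax, hρl0⟩
      have hls : 0 < ls := lt_of_lt_of_le hl0.1 hls_mem.1
      have hdkl : Dkl (Gf Po V ls) Po = ρ := by rw [dkl_Gf Po V ls hPo]; exact hφs
      set xs := ∑ s, Gf Po V ls s * V s with hxs
      have hxsX : xs ∈ X := hGX ls hls (le_of_eq hdkl)
      have hLxs : L ≤ xs := csInf_le hXbdd hxsX
      have heq : ls * ρ + ls * Real.log (Zf Po V ls) = -xs := by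
        have h := hφs
        unfold phifn at h
        rw [← sum_Gf_V Po V ls, ← hxs] at h
        have h2 : -xs / ls = ρ + Real.log (Zf Po V ls) := by linarith
        rw [div_eq_iff (ne_of_gt hls)] at h2
        linarith
      have hmem : f ls ∈ F := ⟨ls, ⟨hls.le, hls_mem.2⟩, rfl⟩
      have h4 : sInf F ≤ f ls := csInf_le hFbdd hmem
      have h5 : f ls = ls * ρ + ls * Real.log (Zf Po V ls) := by
        simp only [hfdef, if_neg (ne_of_gt hls)]
        rfl
      rw [h5, heq] at h4
      linarith
    · -- case B : L = m and the infimum is approached as lam → 0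
      push_neg at hcase
      have hLlem : L ≤ m := by
        refine le_of_forall_pos_le_add ?_
        intro ε hε
        set c := -Real.log (Po sm) with hcdef
        have hPo1 : Po sm ≤ 1 := by
          have := Finset.single_le_sum (f := fun s => Po s) (fun s _ => hPo.1 s)
            (Finset.mem_univ sm)
          rwa [hPo.2] at this
        have hc : 0 ≤ c := by
          have := Real.log_nonpos hsm.le hPo1
          linarith
        set l := min lmax (ε / (c + 1)) with hldef
        have hl : 0 < l := lt_min hlmax (div_pos hε (by linarith))
        have hlm : l ≤ lmax := min_le_left _ _
        have hφ : phifn Po V l < ρ := hcase l ⟨hl, hlm⟩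
        have hdkl : Dkl (Gf Po V l) Po ≤ ρ := by rw [dkl_Gf Po V l hPo]; exact hφ.le
        have hxX := hGX l hl hdkl
        have hLx : L ≤ ∑ s, Gf Po V l s * V s := csInf_le hXbdd hxX
        have hdkl0 : 0 ≤ Dkl (Gf Po V l) Po :=
          dkl_nonneg (Gf Po V l) Po (Gf_simplex Po V l hPo) hPo
            (fun s h => Gf_ac Po V l s h)
        rw [dkl_Gf Po V l hPo] at hdkl0
        unfold phifn at hdkl0
        rw [← sum_Gf_V Po V l] at hdkl0
        -- log Zf ≥ log (Po sm) - m / l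
        have hZge := Zf_ge_single Po V l sm hPo
        have hZl : Real.log (Po sm) + (-V sm / l) ≤ Real.log (Zf Po V l) := by
          have h1 : 0 < Po sm * Real.exp (-V sm / l) := mul_pos hsm (Real.exp_pos _)
          have := Real.log_le_log h1 hZge
          rwa [Real.log_mul (ne_of_gt hsm) (ne_of_gt (Real.exp_pos _)), Real.log_exp] at this
        -- x ≤ l * (c + m / l) = l c + m
        have hx_le : ∑ s, Gf Po V l s * V s ≤ l * c + m := by
          have hne3 : (-∑ s, Gf Po V l s * V s) / l
              = -((∑ s, Gf Po V l s * V s) / l) := by ring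
          have h2 : (∑ s, Gf Po V l s * V s) / l ≤ -Real.log (Zf Po V l) := by linarith
          have h3 : ∑ s, Gf Po V l s * V s ≤ -Real.log (Zf Po V l) * l := by
            rw [← div_le_iff₀ hl]; linarith
          have h4 : -Real.log (Zf Po V l) ≤ c + m / l := by
            rw [← hmVsm] at hZl
            have : -(-m / l) = m / l := by ring
            nlinarith [hZl]
          calc ∑ s, Gf Po V l s * V s ≤ (c + m / l) * l :=
                le_trans h3 (mul_le_mul_of_nonneg_right h4 hl.le)
            _ = l * c + m := by field_simp
        have hlc : l * c ≤ ε := by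
          have hle : l ≤ ε / (c + 1) := min_le_right _ _
          have : l * c ≤ (ε / (c + 1)) * c := mul_le_mul_of_nonneg_right hle hc
          have h6 : (ε / (c + 1)) * c ≤ ε := by
            rw [div_mul_eq_mul_div, div_le_iff₀ (by linarith : (0:ℝ) < c + 1)]
            nlinarith
          exact this.trans h6
        linarith
      have hLeq : L = m := le_antisymm hLlem hLm
      -- now show sInf F ≤ -m
      have : sInf F ≤ -m := by
        refine le_of_forall_pos_le_add ?_
        intro ε hε
        set l := min lmax (ε / ρ) with hldef
        have hl : 0 < l := lt_min hlmax (div_pos hε hρ)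
        have hlm : l ≤ lmax := min_le_left _ _
        have hmem : f l ∈ F := ⟨l, ⟨hl.le, hlm⟩, rfl⟩
        have h4 : sInf F ≤ f l := csInf_le hFbdd hmem
        have h5 : f l = l * ρ + l * Real.log (Zf Po V l) := by
          simp only [hfdef, if_neg (ne_of_gt hl)]
          rfl
        have hZle := Zf_le_exp Po V m l hl hPo hm_le
        have hlog : Real.log (Zf Po V l) ≤ -m / l := by
          have := Real.log_le_log (Zf_pos Po V l hPo) hZle
          rwa [Real.log_exp] at this
        have h6 : l * Real.log (Zf Po V l) ≤ -m := by
          have := mul_le_mul_of_nonneg_left hlog hl.le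
          have h7 : l * (-m / l) = -m := by rw [mul_comm, div_mul_cancel₀ _ (ne_of_gt hl)]
          linarith
        have h8 : l * ρ ≤ ε := by
          have hle : l ≤ ε / ρ := min_le_right _ _
          have := mul_le_mul_of_nonneg_right hle hρ.le
          rw [div_mul_cancel₀ _ (ne_of_gt hρ)] at this
          linarith
        rw [h5] at h4
        linarith
      rw [hLeq]
      linarith
  have hmain : sInf F = -L := le_antisymm hup hlow
  show sInf X = -sInf F
  rw [hmain, neg_neg]
end

section
/- Fix H ≥ 1, ρ > 0, θ ∈ (0,1), δ ∈ (0,1), and P° ∈ Δ(S). Let X₁, …, X_N be i.i.d. samples from P° and let P̂° be the empirical distribution P̂°(s') = (1/N)·#{i : X_i = s'}. Let 𝒫 = {P ∈ Δ(S) : D_TV(P, P°) ≤ ρ} and 𝒫̂ = {P ∈ Δ(S) : D_TV(P, P̂°) ≤ ρ}. Then for any fixed V : S → ℝ with 0 ≤ V(s) ≤ H for all s, with probability at least 1 − δ, |L_𝒫 V − L_𝒫̂ V| ≤ √( H² log(4H/(θδ)) / (2N) ) + 2θ. -/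
/-- Total variation distance. -/
noncomputable def Dtv {S : Type*} [Fintype S] (P Q : S → ℝ) : ℝ :=
  (1/2) * ∑ s, |P s - Q s|

/-- Empirical distribution of the samples `x 0, …, x (N-1)`. -/
noncomputable def empDist {S : Type*} [Fintype S] [DecidableEq S] {N : ℕ}
    (x : Fin N → S) : S → ℝ :=
  fun s' => ((Finset.univ.filter fun i => x i = s').card : ℝ) / N

set_option linter.unusedSectionVars false
set_option linter.unusedSectionVars false

/-- Scalar Hoeffding lemma. -/
lemma hoeff_scalar (p u : ℝ) (hp0 : 0 ≤ p) (hp1 : p ≤ 1) (hu : 0 ≤ u) :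
    1 - p + p * Real.exp u ≤ Real.exp (p * u + u ^ 2 / 8) := by
  set D : ℝ → ℝ := fun v => 1 - p + p * Real.exp v with hD
  have hDpos : ∀ v, 0 < D v := by
    intro v
    have h1 := Real.exp_pos v
    rcases eq_or_lt_of_le hp0 with h | h
    · simp [hD, ← h]
    · have : 0 < p * Real.exp v := mul_pos h h1
      simp only [hD]; nlinarith
  have hDder : ∀ v, HasDerivAt D (p * Real.exp v) v := by
    intro v
    exact ((Real.hasDerivAt_exp v).const_mul p).const_add (1 - p)
  set g : ℝ → ℝ := fun v => p * v + v ^ 2 / 8 - Real.log (D v) with hg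
  set G : ℝ → ℝ := fun v => p + v / 4 - p * Real.exp v / D v with hG
  have hgder : ∀ v, HasDerivAt g (G v) v := by
    intro v
    have hlog : HasDerivAt (fun w => Real.log (D w)) (p * Real.exp v / D v) v :=
      (hDder v).log (hDpos v).ne'
    have h1 : HasDerivAt (fun w => p * w + w ^ 2 / 8) (p + 2 * v / 8) v := by
      have := ((hasDerivAt_id' v).const_mul p).add
        (((hasDerivAt_pow 2 v)).div_const 8)
      exact this.congr_deriv (by norm_num)
    have := h1.sub hlog
    refine this.congr_deriv ?_
    simp only [hG]; ring
  have hGder : ∀ v, HasDerivAt G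
      (1 / 4 - (p * Real.exp v * D v - p * Real.exp v * (p * Real.exp v)) / (D v) ^ 2) v := by
    intro v
    have hq : HasDerivAt (fun w => p * Real.exp w / D w)
        ((p * Real.exp v * D v - p * Real.exp v * (p * Real.exp v)) / (D v) ^ 2) v :=
      ((Real.hasDerivAt_exp v).const_mul p).div (hDder v) (hDpos v).ne'
    have h1 : HasDerivAt (fun w => p + w / 4) (1 / 4) v := by
      simpa using ((hasDerivAt_id v).div_const 4).const_add p
    exact h1.sub hq
  have hGzz : ∀ v, 0 ≤ 1 / 4 - (p * Real.exp v * D v - p * Real.exp v * (p * Real.exp v)) / (D v) ^ 2 := by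
    intro v
    rw [sub_nonneg, div_le_iff₀ (pow_pos (hDpos v) 2)]
    nlinarith [sq_nonneg (D v - 2 * (p * Real.exp v)), (hDpos v), sq_nonneg (1 - p - p * Real.exp v)]
  have hGmono : Monotone G := by
    apply monotone_of_deriv_nonneg
    · exact fun v => (hGder v).differentiableAt
    · intro v
      rw [(hGder v).deriv]
      exact hGzz v
  have hG0 : G 0 = 0 := by simp [hG, hD]
  have hGnn : ∀ v, 0 ≤ v → 0 ≤ G v := by
    intro v hv
    have := hGmono hv
    rwa [hG0] at this
  have hgmono : MonotoneOn g (Set.Ici (0:ℝ)) := by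
    apply monotoneOn_of_deriv_nonneg (convex_Ici 0)
    · exact (fun v _ => (hgder v).differentiableAt.continuousAt.continuousWithinAt)
    · intro v hv
      exact ((hgder v).differentiableAt).differentiableWithinAt
    · intro v hv
      rw [(hgder v).deriv]
      exact hGnn v (le_of_lt (by simpa using hv))
  have hg0 : g 0 = 0 := by simp [hg, hD]
  have hgu : 0 ≤ g u := by
    have := hgmono Set.self_mem_Ici (Set.mem_Ici.2 hu) hu
    rwa [hg0] at this
  have hlog : Real.log (D u) ≤ p * u + u ^ 2 / 8 := by
    simp only [hg] at hgu; linarith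
  have := (Real.log_le_iff_le_exp (hDpos u)).1 hlog
  simpa [hD] using this


lemma mgf_bound {S : Type*} [Fintype S] (Q : S → ℝ) (hQ : isSimplex Q)
    (f : S → ℝ) (H : ℝ) (hHpos : 0 < H) (hf : ∀ s, f s ∈ Set.Icc (0:ℝ) H)
    (lam : ℝ) (hl : 0 ≤ lam) :
    ∑ s, Q s * Real.exp (lam * (f s - ∑ t, Q t * f t)) ≤ Real.exp (lam ^ 2 * H ^ 2 / 8) := by
  set μ := ∑ t, Q t * f t with hμ
  have hμ0 : 0 ≤ μ := Finset.sum_nonneg fun s _ => mul_nonneg (hQ.1 s) (hf s).1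
  have hμH : μ ≤ H := by
    calc μ ≤ ∑ t, Q t * H := Finset.sum_le_sum fun s _ =>
            mul_le_mul_of_nonneg_left (hf s).2 (hQ.1 s)
    _ = H := by rw [← Finset.sum_mul, hQ.2, one_mul]
  have hpt : ∀ s, Real.exp (lam * f s) ≤
      (1 - f s / H) * 1 + (f s / H) * Real.exp (lam * H) := by
    intro s
    have ht0 : 0 ≤ f s / H := div_nonneg (hf s).1 hHpos.le
    have ht1 : f s / H ≤ 1 := (div_le_one hHpos).2 (hf s).2
    have h := convexOn_exp.2 (Set.mem_univ (0:ℝ)) (Set.mem_univ (lam * H))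
      (by linarith : (0:ℝ) ≤ 1 - f s / H) ht0 (by ring)
    have harg : (1 - f s / H) • (0:ℝ) + (f s / H) • (lam * H) = lam * f s := by
      simp only [smul_eq_mul]; field_simp; ring
    rw [harg] at h
    simpa [Real.exp_zero] using h
  have hsum : ∑ s, Q s * Real.exp (lam * f s) ≤
      1 - μ / H + (μ / H) * Real.exp (lam * H) := by
    calc ∑ s, Q s * Real.exp (lam * f s)
        ≤ ∑ s, Q s * ((1 - f s / H) * 1 + (f s / H) * Real.exp (lam * H)) :=
          Finset.sum_le_sum fun s _ => mul_le_mul_of_nonneg_left (hpt s) (hQ.1 s)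
      _ = (∑ s, Q s) - (∑ s, Q s * f s) / H + ((∑ s, Q s * f s) / H) * Real.exp (lam * H) := by
          rw [Finset.sum_div, Finset.sum_mul, ← Finset.sum_sub_distrib, ← Finset.sum_add_distrib]
          apply Finset.sum_congr rfl
          intro s _
          field_simp
      _ = 1 - μ / H + (μ / H) * Real.exp (lam * H) := by rw [hQ.2]
  have hkey : 1 - μ / H + (μ / H) * Real.exp (lam * H) ≤
      Real.exp ((μ / H) * (lam * H) + (lam * H) ^ 2 / 8) :=
    hoeff_scalar (μ / H) (lam * H) (div_nonneg hμ0 hHpos.le)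
      ((div_le_one hHpos).2 hμH) (mul_nonneg hl hHpos.le)
  have hexp : ∀ s, Real.exp (lam * (f s - μ)) = Real.exp (lam * f s) * Real.exp (-(lam * μ)) := by
    intro s; rw [← Real.exp_add]; ring_nf
  calc ∑ s, Q s * Real.exp (lam * (f s - μ))
      = (∑ s, Q s * Real.exp (lam * f s)) * Real.exp (-(lam * μ)) := by
        rw [Finset.sum_mul]
        apply Finset.sum_congr rfl
        intro s _
        rw [hexp s]; ring
    _ ≤ Real.exp ((μ / H) * (lam * H) + (lam * H) ^ 2 / 8) * Real.exp (-(lam * μ)) := by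
        apply mul_le_mul_of_nonneg_right (le_trans hsum hkey) (Real.exp_pos _).le
    _ = Real.exp ((μ / H) * (lam * H) + (lam * H) ^ 2 / 8 + -(lam * μ)) := by
        rw [← Real.exp_add]
    _ = Real.exp (lam ^ 2 * H ^ 2 / 8) := by
        congr 1
        field_simp
        ring

lemma chernoff {S : Type*} [Fintype S] {N : ℕ} (Po : S → ℝ) (hPo : isSimplex Po)
    (f : S → ℝ) (H t : ℝ) (hHpos : 0 < H) (hf : ∀ s, f s ∈ Set.Icc (0:ℝ) H) (ht : 0 ≤ t) :
    ∑ x : Fin N → S, (if (N:ℝ) * t ≤ ∑ i, (f (x i) - ∑ s, Po s * f s) then ∏ i, Po (x i) else 0)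
      ≤ Real.exp (-(2 * N * t ^ 2 / H ^ 2)) := by
  set μ := ∑ s, Po s * f s with hμ
  set lam := 4 * t / H ^ 2 with hlam
  have hlam0 : 0 ≤ lam := by positivity
  have hw : ∀ x : Fin N → S, (0:ℝ) ≤ ∏ i, Po (x i) :=
    fun x => Finset.prod_nonneg fun i _ => hPo.1 (x i)
  have step1 : ∀ x : Fin N → S,
      (if (N:ℝ) * t ≤ ∑ i, (f (x i) - μ) then ∏ i, Po (x i) else 0)
        ≤ (∏ i, Po (x i)) * Real.exp (lam * ((∑ i, (f (x i) - μ)) - N * t)) := by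
    intro x
    split_ifs with h
    · nth_rewrite 1 [← mul_one (∏ i, Po (x i))]
      apply mul_le_mul_of_nonneg_left _ (hw x)
      rw [← Real.exp_zero]
      apply Real.exp_le_exp.2
      have : (0:ℝ) ≤ (∑ i, (f (x i) - μ)) - N * t := by linarith
      exact mul_nonneg hlam0 this
    · exact mul_nonneg (hw x) (Real.exp_pos _).le
  have step2 : ∀ x : Fin N → S,
      (∏ i, Po (x i)) * Real.exp (lam * ((∑ i, (f (x i) - μ)) - N * t))
        = Real.exp (-(lam * (N * t))) * ∏ i, (Po (x i) * Real.exp (lam * (f (x i) - μ))) := by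
    intro x
    rw [Finset.prod_mul_distrib, mul_sub, Finset.mul_sum, Real.exp_sub, Real.exp_sum]
    rw [div_eq_mul_inv, ← Real.exp_neg]
    ring
  have step3 : ∑ x : Fin N → S, ∏ i, (Po (x i) * Real.exp (lam * (f (x i) - μ)))
      = (∑ s, Po s * Real.exp (lam * (f s - μ))) ^ N := by
    rw [Finset.sum_pow' Finset.univ (fun s => Po s * Real.exp (lam * (f s - μ))) N,
      Fintype.piFinset_univ]
  have hmgf := mgf_bound Po hPo f H hHpos hf lam hlam0
  have hmgf0 : 0 ≤ ∑ s, Po s * Real.exp (lam * (f s - μ)) :=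
    Finset.sum_nonneg fun s _ => mul_nonneg (hPo.1 s) (Real.exp_pos _).le
  calc ∑ x : Fin N → S, (if (N:ℝ) * t ≤ ∑ i, (f (x i) - μ) then ∏ i, Po (x i) else 0)
      ≤ ∑ x : Fin N → S, (∏ i, Po (x i)) * Real.exp (lam * ((∑ i, (f (x i) - μ)) - N * t)) :=
        Finset.sum_le_sum fun x _ => step1 x
    _ = Real.exp (-(lam * (N * t))) * ∑ x : Fin N → S, ∏ i, (Po (x i) * Real.exp (lam * (f (x i) - μ))) := by
        rw [Finset.mul_sum]
        exact Finset.sum_congr rfl fun x _ => step2 x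
    _ = Real.exp (-(lam * (N * t))) * (∑ s, Po s * Real.exp (lam * (f s - μ))) ^ N := by rw [step3]
    _ ≤ Real.exp (-(lam * (N * t))) * (Real.exp (lam ^ 2 * H ^ 2 / 8)) ^ N :=
        mul_le_mul_of_nonneg_left (pow_le_pow_left₀ hmgf0 hmgf N) (Real.exp_pos _).le
    _ = Real.exp (-(lam * (N * t)) + N * (lam ^ 2 * H ^ 2 / 8)) := by
        rw [← Real.exp_nat_mul, ← Real.exp_add]
    _ = Real.exp (-(2 * N * t ^ 2 / H ^ 2)) := by
        congr 1
        rw [hlam]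
        field_simp
        ring


section Dual

variable {S : Type*} [Fintype S] [Nonempty S]

lemma EV_ge (P V : S → ℝ) (hP : isSimplex P) (m : ℝ) (hm : ∀ s, m ≤ V s) :
    m ≤ ∑ s, P s * V s := by
  calc m = ∑ s, P s * m := by rw [← Finset.sum_mul, hP.2, one_mul]
    _ ≤ ∑ s, P s * V s := Finset.sum_le_sum fun s _ =>
        mul_le_mul_of_nonneg_left (hm s) (hP.1 s)

lemma Dtv_self (Q : S → ℝ) : Dtv Q Q = 0 := by simp [Dtv]

lemma ball_bdd (V Q : S → ℝ) (ρ m : ℝ) (hm : ∀ s, m ≤ V s) :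
    BddBelow {x | ∃ P ∈ {P : S → ℝ | isSimplex P ∧ Dtv P Q ≤ ρ}, x = ∑ s, P s * V s} := by
  refine ⟨m, ?_⟩
  rintro x ⟨P, ⟨hP, _⟩, rfl⟩
  exact EV_ge P V hP m hm

lemma EV_abs_diff (P Q f : S → ℝ) (hP : isSimplex P) (hQ : isSimplex Q) (lo hi : ℝ)
    (hb : ∀ s, lo ≤ f s ∧ f s ≤ hi) :
    |∑ s, P s * f s - ∑ s, Q s * f s| ≤ Dtv P Q * (hi - lo) := by
  set c := (hi + lo) / 2 with hc
  have key : ∑ s, P s * f s - ∑ s, Q s * f s = ∑ s, (P s - Q s) * (f s - c) := by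
    simp only [sub_mul, mul_sub]
    rw [Finset.sum_sub_distrib, Finset.sum_sub_distrib, Finset.sum_sub_distrib]
    have h1 : ∑ s, P s * c = c := by rw [← Finset.sum_mul, hP.2, one_mul]
    have h2 : ∑ s, Q s * c = c := by rw [← Finset.sum_mul, hQ.2, one_mul]
    rw [h1, h2]; ring
  rw [key]
  calc |∑ s, (P s - Q s) * (f s - c)| ≤ ∑ s, |(P s - Q s) * (f s - c)| :=
        Finset.abs_sum_le_sum_abs _ _
    _ ≤ ∑ s, |P s - Q s| * ((hi - lo) / 2) := by
        apply Finset.sum_le_sum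
        intro s _
        rw [abs_mul]
        apply mul_le_mul_of_nonneg_left _ (abs_nonneg _)
        rw [abs_le, hc]
        exact ⟨by linarith [(hb s).1], by linarith [(hb s).2]⟩
    _ = Dtv P Q * (hi - lo) := by
        rw [Dtv, ← Finset.sum_mul]; ring

lemma weak_dual_s8 (V Q : S → ℝ) (hQ : isSimplex Q) (ρ m M : ℝ) (hρ0 : 0 ≤ ρ)
    (hm : ∀ s, m ≤ V s) (hM : ∀ s, V s ≤ M) (α : ℝ)
    (P : S → ℝ) (hP : isSimplex P) (hD : Dtv P Q ≤ ρ) :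
    (∑ s, Q s * min (V s) α) - ρ * (min M α - min m α) ≤ ∑ s, P s * V s := by
  have hb : ∀ s, min m α ≤ min (V s) α ∧ min (V s) α ≤ min M α :=
    fun s => ⟨min_le_min (hm s) le_rfl, min_le_min (hM s) le_rfl⟩
  have habs := EV_abs_diff P Q (fun s => min (V s) α) hP hQ (min m α) (min M α) hb
  have hspan : 0 ≤ min M α - min m α := by
    have s0 := Classical.arbitrary S
    linarith [(hb s0).1, (hb s0).2]
  have hD2 : Dtv P Q * (min M α - min m α) ≤ ρ * (min M α - min m α) :=
    mul_le_mul_of_nonneg_right hD hspan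
  have h1 : ∑ s, P s * min (V s) α ≤ ∑ s, P s * V s :=
    Finset.sum_le_sum fun s _ =>
      mul_le_mul_of_nonneg_left (min_le_left _ _) (hP.1 s)
  have := abs_le.1 habs
  linarith [this.1]

lemma weak_dual_Lrob (V Q : S → ℝ) (hQ : isSimplex Q) (ρ m M : ℝ) (hρ0 : 0 ≤ ρ)
    (hm : ∀ s, m ≤ V s) (hM : ∀ s, V s ≤ M) (α : ℝ) :
    (∑ s, Q s * min (V s) α) - ρ * (min M α - min m α) ≤
      Lrob {P : S → ℝ | isSimplex P ∧ Dtv P Q ≤ ρ} V := by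
  apply le_csInf
  · exact ⟨∑ s, Q s * V s, Q, ⟨hQ, by rw [Dtv_self]; exact hρ0⟩, rfl⟩
  · rintro b ⟨P, ⟨hP, hD⟩, rfl⟩
    exact weak_dual_s8 V Q hQ ρ m M hρ0 hm hM α P hP hD

end Dual

section Strong
variable {S : Type*} [Fintype S] [Nonempty S]

lemma strong_dual (V Q : S → ℝ) (hQ : isSimplex Q) (ρ : ℝ) (hρ : 0 < ρ)
    (m M : ℝ) (s₀ : S) (hs₀ : V s₀ = m) (hm : ∀ s, m ≤ V s)
    (s₁ : S) (hs₁ : V s₁ = M) (hM : ∀ s, V s ≤ M) :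
    ∃ α, m ≤ α ∧ α ≤ M ∧
      Lrob {P : S → ℝ | isSimplex P ∧ Dtv P Q ≤ ρ} V ≤
        (∑ s, Q s * min (V s) α) - ρ * (min M α - min m α) := by
  classical
  set F : ℝ → ℝ := fun v => ∑ s ∈ Finset.univ.filter (fun s => v < V s), Q s with hF
  have hmM : m ≤ M := hs₁ ▸ hm s₁
  have hbdd := ball_bdd V Q ρ m hm
  by_cases hA : F m ≤ ρ
  · -- easy case: move everything to the bottom
    refine ⟨m, le_rfl, hmM, ?_⟩
    set P : S → ℝ := fun s => if m < V s then 0 else Q s + (if s = s₀ then F m else 0) with hPdef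
    have hFm0 : 0 ≤ F m := Finset.sum_nonneg fun s _ => hQ.1 s
    have hs₀mem : ¬ m < V s₀ := by rw [hs₀]; exact lt_irrefl m
    have hPsum : ∑ s, P s = 1 := by
      rw [← Finset.sum_filter_add_sum_filter_not Finset.univ (fun s => m < V s) P]
      have e1 : ∑ s ∈ Finset.univ.filter (fun s => m < V s), P s = 0 :=
        Finset.sum_eq_zero fun s hs => by
          simp only [Finset.mem_filter] at hs
          simp [hPdef, hs.2]
      have hs₀f : s₀ ∈ Finset.univ.filter (fun s => ¬ m < V s) :=
        Finset.mem_filter.2 ⟨Finset.mem_univ _, hs₀mem⟩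
      have step : ∀ s ∈ Finset.univ.filter (fun s => ¬ m < V s),
          P s = Q s + (if s = s₀ then F m else 0) := by
        intro s hs
        simp only [Finset.mem_filter] at hs
        simp [hPdef, hs.2]
      have e2 : ∑ s ∈ Finset.univ.filter (fun s => ¬ m < V s), P s
          = (∑ s ∈ Finset.univ.filter (fun s => ¬ m < V s), Q s) + F m := by
        rw [Finset.sum_congr rfl step, Finset.sum_add_distrib,
          Finset.sum_ite_eq' _ s₀ (fun _ => F m), if_pos hs₀f]
      have e3 : (∑ s ∈ Finset.univ.filter (fun s => ¬ m < V s), Q s) + F m = ∑ s, Q s := by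
        rw [hF, add_comm, Finset.sum_filter_add_sum_filter_not]
      rw [e1, e2, zero_add, e3, hQ.2]
    have hPnn : ∀ s, 0 ≤ P s := by
      intro s
      by_cases h : m < V s
      · simp [hPdef, h]
      · simp only [hPdef, if_neg h]
        exact add_nonneg (hQ.1 s) (by split <;> simp [hFm0])
    have hDtv : Dtv P Q ≤ ρ := by
      rw [Dtv]
      have : ∑ s, |P s - Q s| = F m + F m := by
        rw [← Finset.sum_filter_add_sum_filter_not Finset.univ (fun s => m < V s)
          (fun s => |P s - Q s|)]
        have e1 : ∑ s ∈ Finset.univ.filter (fun s => m < V s), |P s - Q s|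
            = F m := by
          rw [hF]
          apply Finset.sum_congr rfl
          intro s hs
          simp only [Finset.mem_filter] at hs
          simp [hPdef, hs.2, abs_of_nonpos, hQ.1 s, neg_sub]
        have hs₀f : s₀ ∈ Finset.univ.filter (fun s => ¬ m < V s) :=
          Finset.mem_filter.2 ⟨Finset.mem_univ _, hs₀mem⟩
        have step : ∀ s ∈ Finset.univ.filter (fun s => ¬ m < V s),
            |P s - Q s| = (if s = s₀ then F m else 0) := by
          intro s hs
          simp only [Finset.mem_filter] at hs
          simp only [hPdef, if_neg hs.2]
          rw [add_sub_cancel_left, abs_of_nonneg (by split <;> simp [hFm0])]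
        have e2 : ∑ s ∈ Finset.univ.filter (fun s => ¬ m < V s), |P s - Q s| = F m := by
          rw [Finset.sum_congr rfl step, Finset.sum_ite_eq' _ s₀ (fun _ => F m), if_pos hs₀f]
        rw [e1, e2]
      rw [this]
      linarith
    have hPV : ∑ s, P s * V s = m := by
      have : ∀ s, P s * V s = P s * m := by
        intro s
        by_cases h : m < V s
        · simp [hPdef, h]
        · have : V s = m := le_antisymm (not_lt.1 h) (hm s)
          rw [this]
      rw [Finset.sum_congr rfl (fun s _ => this s), ← Finset.sum_mul, hPsum, one_mul]
    have hRHS : (∑ s, Q s * min (V s) m) - ρ * (min M m - min m m) = m := by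
      have e1 : ∀ s, min (V s) m = m := fun s => min_eq_right (hm s)
      have e2 : min M m = m := min_eq_right hmM
      rw [Finset.sum_congr rfl (fun s _ => by rw [e1 s]), ← Finset.sum_mul, hQ.2, e2]
      simp
    rw [hRHS, ← hPV]
    exact csInf_le hbdd ⟨P, ⟨⟨hPnn, hPsum⟩, hDtv⟩, rfl⟩
  · push_neg at hA
    set T : Finset ℝ := Finset.image V Finset.univ with hT
    set A : Finset ℝ := T.filter (fun v => F v ≤ ρ) with hAdef
    have hMA : M ∈ A := by
      refine Finset.mem_filter.2 ⟨Finset.mem_image.2 ⟨s₁, Finset.mem_univ _, hs₁⟩, ?_⟩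
      have hemp : Finset.univ.filter (fun s => M < V s) = ∅ :=
        Finset.filter_eq_empty_iff.2 (fun {s} _ => not_lt.2 (hM s))
      show F M ≤ ρ
      rw [hF]
      simp only [hemp, Finset.sum_empty]
      exact hρ.le
    have hAne : A.Nonempty := ⟨M, hMA⟩
    set α := A.min' hAne with hα
    have hαA : α ∈ A := A.min'_mem hAne
    obtain ⟨hαT, hFα⟩ := Finset.mem_filter.1 hαA
    obtain ⟨sα, _, hsα⟩ := Finset.mem_image.1 hαT
    have hmα : m < α := by
      rcases lt_or_eq_of_le (show m ≤ α by rw [← hsα]; exact hm sα) with h | h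
      · exact h
      · exfalso; rw [← h] at hFα; linarith
    have hαM : α ≤ M := by rw [← hsα]; exact hM sα
    set B := T.filter (fun v => v < α) with hB
    have hmB : m ∈ B :=
      Finset.mem_filter.2 ⟨Finset.mem_image.2 ⟨s₀, Finset.mem_univ _, hs₀⟩, hmα⟩
    have hBne : B.Nonempty := ⟨m, hmB⟩
    set v' := B.max' hBne with hv'
    obtain ⟨hv'T, hv'α⟩ := Finset.mem_filter.1 (B.max'_mem hBne)
    have hFv' : ρ < F v' := by
      by_contra h
      push_neg at h
      have hmem : v' ∈ A := Finset.mem_filter.2 ⟨hv'T, h⟩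
      have := A.min'_le v' hmem
      rw [← hα] at this
      linarith
    have hset : Finset.univ.filter (fun s => v' < V s)
        = Finset.univ.filter (fun s => α ≤ V s) := by
      apply Finset.filter_congr
      intro s _
      constructor
      · intro h
        by_contra hc
        push_neg at hc
        have hVB : V s ∈ B := Finset.mem_filter.2
          ⟨Finset.mem_image.2 ⟨s, Finset.mem_univ _, rfl⟩, hc⟩
        have := B.le_max' (V s) hVB
        rw [← hv'] at this
        linarith
      · intro h; linarith
    have hW : ρ < ∑ s ∈ Finset.univ.filter (fun s => α ≤ V s), Q s := by
      rw [← hset]; exact hFv'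
    set U1 := Finset.univ.filter (fun s => α < V s) with hU1
    set U2 := Finset.univ.filter (fun s => V s = α) with hU2
    set U3 := Finset.univ.filter (fun s => V s < α) with hU3
    have split : ∀ f : S → ℝ, ∑ s, f s = ∑ s ∈ U1, f s + (∑ s ∈ U2, f s + ∑ s ∈ U3, f s) := by
      intro f
      rw [← Finset.sum_filter_add_sum_filter_not Finset.univ (fun s => α < V s) f]
      congr 1
      rw [← Finset.sum_filter_add_sum_filter_not
        (Finset.univ.filter (fun s => ¬ α < V s)) (fun s => V s = α) f]
      congr 1
      · congr 1
        rw [Finset.filter_filter]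
        apply Finset.filter_congr
        intro s _
        constructor
        · exact fun h => h.2
        · intro h; exact ⟨by rw [h]; exact lt_irrefl α, h⟩
      · congr 1
        rw [Finset.filter_filter]
        apply Finset.filter_congr
        intro s _
        constructor
        · intro h; rcases lt_or_eq_of_le (not_lt.1 h.1) with h' | h'
          · exact h'
          · exact absurd h' h.2
        · intro h; exact ⟨not_lt.2 h.le, ne_of_lt h⟩
    have hsplitW : ∑ s ∈ Finset.univ.filter (fun s => α ≤ V s), Q s
        = ∑ s ∈ U1, Q s + ∑ s ∈ U2, Q s := by
      rw [← Finset.sum_filter_add_sum_filter_not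
        (Finset.univ.filter (fun s => α ≤ V s)) (fun s => α < V s) Q]
      congr 1
      · congr 1
        rw [Finset.filter_filter]
        apply Finset.filter_congr
        intro s _
        exact ⟨fun h => h.2, fun h => ⟨h.le, h⟩⟩
      · congr 1
        rw [Finset.filter_filter]
        apply Finset.filter_congr
        intro s _
        constructor
        · intro h; exact le_antisymm (not_lt.1 h.2) h.1
        · intro h; exact ⟨h.ge, not_lt.2 h.le⟩
    set a := F α with ha
    have haU1 : a = ∑ s ∈ U1, Q s := rfl
    set E := ∑ s ∈ U2, Q s with hE
    have ha0 : 0 ≤ a := Finset.sum_nonneg fun s _ => hQ.1 s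
    have haρ : a ≤ ρ := hFα
    have hEρ : ρ - a < E := by
      have := hW
      rw [hsplitW, ← haU1] at this
      linarith
    have hE0 : 0 < E := lt_of_le_of_lt (by linarith) hEρ
    set c := (ρ - a) / E with hc
    have hc0 : 0 ≤ c := div_nonneg (by linarith) hE0.le
    have hc1 : c ≤ 1 := by rw [hc, div_le_one hE0]; linarith
    have hcE : c * E = ρ - a := by rw [hc]; field_simp
    set P : S → ℝ := fun s => if α < V s then 0 else if V s = α then (1 - c) * Q s
      else Q s + (if s = s₀ then ρ else 0) with hPdef
    have hs₀U3 : s₀ ∈ U3 := Finset.mem_filter.2 ⟨Finset.mem_univ _, by rw [hs₀]; exact hmα⟩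
    have hPU1 : ∀ s ∈ U1, P s = 0 := by
      intro s hs
      have := (Finset.mem_filter.1 hs).2
      simp [hPdef, this]
    have hPU2 : ∀ s ∈ U2, P s = (1 - c) * Q s := by
      intro s hs
      have h2 := (Finset.mem_filter.1 hs).2
      have h1 : ¬ α < V s := by rw [h2]; exact lt_irrefl α
      simp [hPdef, h1, h2]
    have hPU3 : ∀ s ∈ U3, P s = Q s + (if s = s₀ then ρ else 0) := by
      intro s hs
      have h3 := (Finset.mem_filter.1 hs).2
      have h1 : ¬ α < V s := not_lt.2 h3.le
      have h2 : ¬ V s = α := ne_of_lt h3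
      simp [hPdef, h1, h2]
    have hQsum : ∑ s ∈ U1, Q s + (∑ s ∈ U2, Q s + ∑ s ∈ U3, Q s) = 1 := by
      rw [← split Q]; exact hQ.2
    have hiteρ : ∑ s ∈ U3, (if s = s₀ then ρ else 0) = ρ := by
      rw [Finset.sum_ite_eq' U3 s₀ (fun _ => ρ), if_pos hs₀U3]
    have hPsum : ∑ s, P s = 1 := by
      rw [split P, Finset.sum_congr rfl hPU1, Finset.sum_congr rfl hPU2,
        Finset.sum_congr rfl hPU3, Finset.sum_const, Finset.sum_add_distrib, hiteρ,
        ← Finset.mul_sum, ← hE]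
      simp only [smul_zero]
      nlinarith [hQsum, hcE]
    have hPnn : ∀ s, 0 ≤ P s := by
      intro s
      by_cases h1 : α < V s
      · simp [hPdef, h1]
      · by_cases h2 : V s = α
        · simp only [hPdef, if_neg h1, if_pos h2]
          exact mul_nonneg (by linarith) (hQ.1 s)
        · simp only [hPdef, if_neg h1, if_neg h2]
          exact add_nonneg (hQ.1 s) (by split <;> [exact hρ.le; exact le_rfl])
    have hDtv : Dtv P Q ≤ ρ := by
      rw [Dtv]
      have e1 : ∀ s ∈ U1, |P s - Q s| = Q s := by
        intro s hs
        rw [hPU1 s hs, zero_sub, abs_neg, abs_of_nonneg (hQ.1 s)]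
      have e2 : ∀ s ∈ U2, |P s - Q s| = c * Q s := by
        intro s hs
        rw [hPU2 s hs]
        have : (1 - c) * Q s - Q s = -(c * Q s) := by ring
        rw [this, abs_neg, abs_of_nonneg (mul_nonneg hc0 (hQ.1 s))]
      have e3 : ∀ s ∈ U3, |P s - Q s| = (if s = s₀ then ρ else 0) := by
        intro s hs
        rw [hPU3 s hs, add_sub_cancel_left,
          abs_of_nonneg (by split <;> [exact hρ.le; exact le_rfl])]
      rw [split (fun s => |P s - Q s|), Finset.sum_congr rfl e1, Finset.sum_congr rfl e2,
        Finset.sum_congr rfl e3, hiteρ, ← Finset.mul_sum, ← hE, ← haU1]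
      nlinarith [hcE]
    have hPV : ∑ s, P s * V s = (1 - c) * α * E + (∑ s ∈ U3, Q s * V s) + ρ * m := by
      rw [split (fun s => P s * V s)]
      have e1 : ∀ s ∈ U1, P s * V s = 0 := fun s hs => by rw [hPU1 s hs, zero_mul]
      have e2 : ∀ s ∈ U2, P s * V s = (1 - c) * Q s * α := by
        intro s hs
        rw [hPU2 s hs, (Finset.mem_filter.1 hs).2]
      have e3 : ∀ s ∈ U3, P s * V s = Q s * V s + (if s = s₀ then ρ * V s else 0) := by
        intro s hs
        rw [hPU3 s hs]
        split <;> ring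
      rw [Finset.sum_congr rfl e1, Finset.sum_congr rfl e2, Finset.sum_congr rfl e3,
        Finset.sum_const, Finset.sum_add_distrib,
        Finset.sum_ite_eq' U3 s₀ (fun s => ρ * V s), if_pos hs₀U3, hs₀]
      have : ∑ s ∈ U2, (1 - c) * Q s * α = (1 - c) * α * E := by
        rw [hE, Finset.mul_sum]
        apply Finset.sum_congr rfl
        intro s _
        ring
      rw [this]
      simp only [smul_zero]
      ring
    have hRHS : (∑ s, Q s * min (V s) α) - ρ * (min M α - min m α)
        = a * α + E * α + (∑ s ∈ U3, Q s * V s) - ρ * (α - m) := by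
      have e1 : ∀ s ∈ U1, Q s * min (V s) α = Q s * α := by
        intro s hs
        rw [min_eq_right (le_of_lt (Finset.mem_filter.1 hs).2)]
      have e2 : ∀ s ∈ U2, Q s * min (V s) α = Q s * α := by
        intro s hs
        rw [(Finset.mem_filter.1 hs).2, min_self]
      have e3 : ∀ s ∈ U3, Q s * min (V s) α = Q s * V s := by
        intro s hs
        rw [min_eq_left (le_of_lt (Finset.mem_filter.1 hs).2)]
      rw [split (fun s => Q s * min (V s) α), Finset.sum_congr rfl e1,
        Finset.sum_congr rfl e2, Finset.sum_congr rfl e3,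
        min_eq_right hαM, min_eq_left hmα.le, ← Finset.sum_mul, ← Finset.sum_mul,
        ← haU1, ← hE]
      ring
    refine ⟨α, hmα.le, hαM, ?_⟩
    have hle : Lrob {P : S → ℝ | isSimplex P ∧ Dtv P Q ≤ ρ} V ≤ ∑ s, P s * V s :=
      csInf_le hbdd ⟨P, ⟨⟨hPnn, hPsum⟩, hDtv⟩, rfl⟩
    rw [hRHS]
    rw [hPV] at hle
    have heq : (1 - c) * α * E + (∑ s ∈ U3, Q s * V s) + ρ * m
        = a * α + E * α + (∑ s ∈ U3, Q s * V s) - ρ * (α - m) := by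
      linear_combination (-α) * hcE
    linarith [hle, heq]

end Strong

section Emp
variable {S : Type*} [Fintype S] [Nonempty S] [DecidableEq S]

lemma empDist_simplex {N : ℕ} (hN : 0 < N) (x : Fin N → S) : isSimplex (empDist x) := by
  constructor
  · intro s
    unfold empDist
    positivity
  · unfold empDist
    rw [← Finset.sum_div]
    rw [div_eq_one_iff_eq (by positivity : (N:ℝ) ≠ 0)]
    rw [← Nat.cast_sum]
    congr 1
    have h := Finset.card_eq_sum_card_fiberwise
      (fun i (_ : i ∈ (Finset.univ : Finset (Fin N))) => Finset.mem_univ (x i))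
    rw [Finset.card_univ, Fintype.card_fin] at h
    exact h.symm

lemma empDist_EV {N : ℕ} (hN : 0 < N) (x : Fin N → S) (f : S → ℝ) :
    ∑ s, empDist x s * f s = (∑ i, f (x i)) / N := by
  unfold empDist
  have hcard : ∀ s : S, ((Finset.univ.filter fun i => x i = s).card : ℝ) / N * f s
      = (∑ i, if x i = s then f s else 0) / N := by
    intro s
    rw [div_mul_eq_mul_div]
    congr 1
    rw [Finset.card_filter]
    push_cast
    rw [Finset.sum_mul]
    apply Finset.sum_congr rfl
    intro i _
    split <;> simp
  rw [Finset.sum_congr rfl (fun s _ => hcard s), ← Finset.sum_div, Finset.sum_comm]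
  congr 1
  apply Finset.sum_congr rfl
  intro i _
  rw [Finset.sum_ite_eq Finset.univ (x i) f, if_pos (Finset.mem_univ _)]

end Emp

section OneSided
variable {S : Type*} [Fintype S] [Nonempty S]

lemma EV_mincap_lip (Q : S → ℝ) (hQ : isSimplex Q) (V : S → ℝ) (α β : ℝ) :
    |∑ s, Q s * min (V s) α - ∑ s, Q s * min (V s) β| ≤ |α - β| := by
  rw [← Finset.sum_sub_distrib]
  calc |∑ s, (Q s * min (V s) α - Q s * min (V s) β)|
      ≤ ∑ s, |Q s * min (V s) α - Q s * min (V s) β| := Finset.abs_sum_le_sum_abs _ _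
    _ ≤ ∑ s, Q s * |α - β| := by
        apply Finset.sum_le_sum
        intro s _
        rw [← mul_sub, abs_mul, abs_of_nonneg (hQ.1 s)]
        apply mul_le_mul_of_nonneg_left _ (hQ.1 s)
        calc |min (V s) α - min (V s) β| ≤ max |V s - V s| |α - β| :=
              abs_min_sub_min_le_max _ _ _ _
          _ = |α - β| := by rw [sub_self, abs_zero, max_eq_right (abs_nonneg _)]
    _ = |α - β| := by rw [← Finset.sum_mul, hQ.2, one_mul]

lemma min_sub_min_bound {c a b : ℝ} (hab : a ≤ b) :
    0 ≤ min c b - min c a ∧ min c b - min c a ≤ b - a := by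
  rcases le_total c a with h | h
  · rw [min_eq_left h, min_eq_left (h.trans hab)]
    constructor <;> linarith
  · rw [min_eq_right h]
    rcases le_total c b with h' | h'
    · rw [min_eq_left h']
      constructor <;> linarith
    · rw [min_eq_right h']
      constructor <;> linarith

lemma span_lip (m M α β : ℝ) :
    |(min M α - min m α) - (min M β - min m β)| ≤ |α - β| := by
  rcases le_total β α with h | h
  · obtain ⟨h1, h2⟩ := min_sub_min_bound (c := M) h
    obtain ⟨h3, h4⟩ := min_sub_min_bound (c := m) h
    rw [abs_of_nonneg (by linarith : (0:ℝ) ≤ α - β)]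
    rw [abs_le]
    constructor <;> linarith
  · obtain ⟨h1, h2⟩ := min_sub_min_bound (c := M) h
    obtain ⟨h3, h4⟩ := min_sub_min_bound (c := m) h
    rw [abs_of_nonpos (by linarith : α - β ≤ 0)]
    rw [abs_le]
    constructor <;> linarith

lemma one_sided (V Q R : S → ℝ) (hQ : isSimplex Q) (hR : isSimplex R)
    (ρ θ ε₁ H m M : ℝ) (hρ : 0 < ρ) (hρ1 : ρ ≤ 1) (hθ : 0 ≤ θ) (hε₁ : 0 ≤ ε₁)
    (s₀ : S) (hs₀ : V s₀ = m) (hm : ∀ s, m ≤ V s)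
    (s₁ : S) (hs₁ : V s₁ = M) (hM : ∀ s, V s ≤ M)
    (hm0 : 0 ≤ m) (hMH : M ≤ H)
    (G : Finset ℝ) (hcover : ∀ α, 0 ≤ α → α ≤ H → ∃ β ∈ G, |α - β| ≤ θ)
    (hgood : ∀ β ∈ G, |∑ s, R s * min (V s) β - ∑ s, Q s * min (V s) β| ≤ ε₁) :
    Lrob {P : S → ℝ | isSimplex P ∧ Dtv P Q ≤ ρ} V - (ε₁ + 2 * θ) ≤
      Lrob {P : S → ℝ | isSimplex P ∧ Dtv P R ≤ ρ} V := by
  obtain ⟨α, hmα, hαM, hstrong⟩ := strong_dual V Q hQ ρ hρ m M s₀ hs₀ hm s₁ hs₁ hM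
  obtain ⟨β, hβG, hβ⟩ := hcover α (hm0.trans hmα) (hαM.trans hMH)
  have hweak := weak_dual_Lrob V R hR ρ m M hρ.le hm hM β
  have h1 := hgood β hβG
  have h2 := EV_mincap_lip Q hQ V α β
  have h3 := span_lip m M α β
  have habs := abs_le.1 h1
  have habs2 := abs_le.1 h2
  have habs3 := abs_le.1 h3
  have hβα : |α - β| ≤ θ := hβ
  have hρspan : ρ * (min M β - min m β) ≤ ρ * (min M α - min m α) + ρ * θ := by
    have : (min M β - min m β) ≤ (min M α - min m α) + θ := by
      have := abs_le.1 (span_lip m M β α)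
      have hba : |β - α| ≤ θ := by rwa [abs_sub_comm]
      have := this.2
      have habsba := abs_le.1 hba
      linarith [habsba.1, habsba.2, (abs_le.1 (span_lip m M β α)).2]
    calc ρ * (min M β - min m β) ≤ ρ * ((min M α - min m α) + θ) :=
          mul_le_mul_of_nonneg_left this hρ.le
      _ = ρ * (min M α - min m α) + ρ * θ := by ring
  have hρθ : ρ * θ ≤ θ := by nlinarith
  have habsβα := abs_le.1 hβα
  linarith [habs.1, habs2.1, habs2.2, hweak, hstrong]

end OneSided

lemma grid_cover (H θ : ℝ) (hH : 0 < H) (hθ : 0 < θ) :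
    ∀ α, 0 ≤ α → α ≤ H → ∃ β ∈ (Finset.range ⌈H/(2*θ)⌉₊).image (fun k : ℕ => (2*(k:ℝ)+1)*θ),
      |α - β| ≤ θ := by
  intro α hα0 hαH
  set K := ⌈H/(2*θ)⌉₊ with hK
  have hK1 : 1 ≤ K := Nat.one_le_iff_ne_zero.2 (by
    have : 0 < K := Nat.ceil_pos.2 (by positivity)
    omega)
  set k0 := ⌊α/(2*θ)⌋₊ with hk0
  by_cases hlt : k0 < K
  · refine ⟨(2*(k0:ℝ)+1)*θ, Finset.mem_image.2 ⟨k0, Finset.mem_range.2 hlt, rfl⟩, ?_⟩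
    have h1 : (k0:ℝ) ≤ α/(2*θ) := Nat.floor_le (by positivity)
    have h2 : α/(2*θ) < (k0:ℝ) + 1 := Nat.lt_floor_add_one _
    have h1' : (k0:ℝ) * (2*θ) ≤ α := by
      rw [← le_div_iff₀ (by positivity)]; exact h1
    have h2' : α < ((k0:ℝ) + 1) * (2*θ) := by
      rw [← div_lt_iff₀ (by positivity)]; exact h2
    rw [abs_le]
    constructor <;> nlinarith
  · push_neg at hlt
    have h1 : (K:ℝ) ≤ (k0:ℝ) := Nat.cast_le.2 hlt
    have h2 : (k0:ℝ) ≤ α/(2*θ) := Nat.floor_le (by positivity)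
    have h3 : H/(2*θ) ≤ (K:ℝ) := Nat.le_ceil _
    have h4 : α/(2*θ) ≤ H/(2*θ) := by gcongr
    have heq : α/(2*θ) = (K:ℝ) := le_antisymm (h4.trans h3) (h1.trans h2)
    have hαval : α = 2*θ*(K:ℝ) := by
      field_simp at heq
      linarith
    refine ⟨(2*((K-1:ℕ):ℝ)+1)*θ, Finset.mem_image.2 ⟨K-1, Finset.mem_range.2 (Nat.sub_lt (lt_of_lt_of_le Nat.zero_lt_one hK1) Nat.one_pos), rfl⟩, ?_⟩
    have hcast : ((K-1:ℕ):ℝ) = (K:ℝ) - 1 := by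
      rw [Nat.cast_sub hK1]; simp
    rw [hcast, hαval, abs_le]
    constructor <;> nlinarith

open Classical in
theorem stmt8 {S : Type*} [Fintype S] [Nonempty S] [DecidableEq S]
    (H ρ θ δ : ℝ) (N : ℕ)
    (hH : 1 ≤ H) (hρ : 0 < ρ) (hθ : θ ∈ Set.Ioo (0:ℝ) 1)
    (hδ : δ ∈ Set.Ioo (0:ℝ) 1) (hN : 0 < N)
    (Po : S → ℝ) (hPo : isSimplex Po)
    (V : S → ℝ) (hV : ∀ s, V s ∈ Set.Icc (0:ℝ) H) :
    1 - δ ≤ ∑ x : Fin N → S,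
      (if |Lrob {P | isSimplex P ∧ Dtv P Po ≤ ρ} V -
            Lrob {P | isSimplex P ∧ Dtv P (empDist x) ≤ ρ} V| ≤
          Real.sqrt (H^2 * Real.log (4 * H / (θ * δ)) / (2 * N)) + 2 * θ
        then ∏ i, Po (x i) else 0) := by
  obtain ⟨hθ0, hθ1⟩ := hθ
  obtain ⟨hδ0, hδ1⟩ := hδ
  have hH0 : (0:ℝ) < H := lt_of_lt_of_le one_pos hH
  have hN0 : (0:ℝ) < N := Nat.cast_pos.2 hN
  have hwsum : ∑ x : Fin N → S, ∏ i, Po (x i) = 1 := by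
    have h := Finset.sum_pow' (Finset.univ : Finset S) Po N
    rw [Fintype.piFinset_univ] at h
    rw [← h, hPo.2, one_pow]
  have hw0 : ∀ x : Fin N → S, 0 ≤ ∏ i, Po (x i) :=
    fun x => Finset.prod_nonneg fun i _ => hPo.1 _
  set ε₁ := Real.sqrt (H^2 * Real.log (4 * H / (θ * δ)) / (2 * N)) with hε₁def
  have hlogpos : 0 < Real.log (4 * H / (θ * δ)) := by
    apply Real.log_pos
    rw [lt_div_iff₀ (by positivity)]
    nlinarith
  have hε₁0 : 0 ≤ ε₁ := Real.sqrt_nonneg _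
  by_cases hρ1 : ρ ≤ 1
  swap
  · push_neg at hρ1
    have hsets : ∀ Q : S → ℝ, isSimplex Q →
        {P : S → ℝ | isSimplex P ∧ Dtv P Q ≤ ρ} = {P : S → ℝ | isSimplex P} := by
      intro Q hQ
      ext P
      simp only [Set.mem_setOf_eq, and_iff_left_iff_imp]
      intro hP
      have h1 : ∑ s, |P s - Q s| ≤ ∑ s, (P s + Q s) := Finset.sum_le_sum fun s _ => by
        calc |P s - Q s| ≤ |P s| + |Q s| := abs_sub _ _
          _ = P s + Q s := by rw [abs_of_nonneg (hP.1 s), abs_of_nonneg (hQ.1 s)]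
      rw [Finset.sum_add_distrib, hP.2, hQ.2] at h1
      rw [Dtv]
      linarith
    have hcond : ∀ x : Fin N → S,
        |Lrob {P : S → ℝ | isSimplex P ∧ Dtv P Po ≤ ρ} V -
          Lrob {P : S → ℝ | isSimplex P ∧ Dtv P (empDist x) ≤ ρ} V| ≤ ε₁ + 2 * θ := by
      intro x
      rw [hsets Po hPo, hsets (empDist x) (empDist_simplex hN x), sub_self, abs_zero]
      linarith
    calc 1 - δ ≤ 1 := by linarith
      _ = ∑ x : Fin N → S, ∏ i, Po (x i) := hwsum.symm
      _ ≤ _ := le_of_eq (Finset.sum_congr rfl fun x _ => (if_pos (hcond x)).symm)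
  · -- main case
    obtain ⟨s₀, -, hs₀min⟩ := Finset.exists_min_image Finset.univ V
      ⟨Classical.arbitrary S, Finset.mem_univ _⟩
    obtain ⟨s₁, -, hs₁max⟩ := Finset.exists_max_image Finset.univ V
      ⟨Classical.arbitrary S, Finset.mem_univ _⟩
    set m := V s₀ with hm_def
    set M := V s₁ with hM_def
    have hm : ∀ s, m ≤ V s := fun s => hs₀min s (Finset.mem_univ s)
    have hM : ∀ s, V s ≤ M := fun s => hs₁max s (Finset.mem_univ s)
    have hm0 : 0 ≤ m := (hV s₀).1
    have hMH : M ≤ H := (hV s₁).2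
    set K := ⌈H/(2*θ)⌉₊ with hKdef
    set G := (Finset.range K).image (fun k : ℕ => (2*(k:ℝ)+1)*θ) with hGdef
    have hcover := grid_cover H θ hH0 hθ0
    have hGpos : ∀ β ∈ G, 0 ≤ β := by
      intro β hβ
      obtain ⟨k, -, rfl⟩ := Finset.mem_image.1 hβ
      positivity
    have hexp : Real.exp (-(2 * N * ε₁^2 / H^2)) = θ * δ / (4 * H) := by
      have hsq : ε₁^2 = H^2 * Real.log (4 * H / (θ * δ)) / (2 * N) :=
        Real.sq_sqrt (by positivity)
      have harg : 2 * N * ε₁^2 / H^2 = Real.log (4 * H / (θ * δ)) := by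
        rw [hsq]; field_simp
      rw [harg, Real.exp_neg, Real.exp_log (by positivity), inv_div]
    -- per-grid-point Chernoff
    have hcher : ∀ β ∈ G,
        (∑ x : Fin N → S, (if ¬ (|∑ s, empDist x s * min (V s) β
            - ∑ s, Po s * min (V s) β| ≤ ε₁) then ∏ i, Po (x i) else 0))
          ≤ 2 * (θ * δ / (4 * H)) := by
      intro β hβ
      have hf : ∀ s, min (V s) β ∈ Set.Icc (0:ℝ) H := fun s =>
        ⟨le_min (hV s).1 (hGpos β hβ), (min_le_left _ _).trans (hV s).2⟩
      have hf' : ∀ s, H - min (V s) β ∈ Set.Icc (0:ℝ) H := fun s =>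
        ⟨by linarith [(hf s).2], by linarith [(hf s).1]⟩
      have hch1 := chernoff (N := N) Po hPo (fun s => min (V s) β) H ε₁ hH0 hf hε₁0
      have hch2 := chernoff (N := N) Po hPo (fun s => H - min (V s) β) H ε₁ hH0 hf' hε₁0
      have hμ' : ∑ s, Po s * (H - min (V s) β) = H - ∑ s, Po s * min (V s) β := by
        simp only [mul_sub]
        rw [Finset.sum_sub_distrib, ← Finset.sum_mul, hPo.2, one_mul]
      have hpt : ∀ x : Fin N → S,
          (if ¬ (|∑ s, empDist x s * min (V s) β - ∑ s, Po s * min (V s) β| ≤ ε₁)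
            then ∏ i, Po (x i) else 0)
          ≤ (if (N:ℝ) * ε₁ ≤ ∑ i, ((fun s => min (V s) β) (x i)
                - ∑ s, Po s * min (V s) β) then ∏ i, Po (x i) else 0)
            + (if (N:ℝ) * ε₁ ≤ ∑ i, ((fun s => H - min (V s) β) (x i)
                - ∑ s, Po s * (H - min (V s) β)) then ∏ i, Po (x i) else 0) := by
        intro x
        have hEV := empDist_EV hN x (fun s => min (V s) β)
        have hdiff : ∑ s, empDist x s * min (V s) β - ∑ s, Po s * min (V s) β
            = (∑ i, (min (V (x i)) β - ∑ s, Po s * min (V s) β)) / N := by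
          rw [hEV, Finset.sum_sub_distrib, Finset.sum_const, Finset.card_univ,
            Fintype.card_fin, sub_div, nsmul_eq_mul,
            mul_div_cancel_left₀ _ (ne_of_gt hN0)]
        have hsum2 : ∑ i, ((H - min (V (x i)) β) - ∑ s, Po s * (H - min (V s) β))
            = - ∑ i, (min (V (x i)) β - ∑ s, Po s * min (V s) β) := by
          rw [hμ', ← Finset.sum_neg_distrib]
          apply Finset.sum_congr rfl
          intro i _
          ring
        simp only []
        by_cases h : |∑ s, empDist x s * min (V s) β - ∑ s, Po s * min (V s) β| ≤ ε₁
        · rw [if_neg (not_not_intro h)]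
          split_ifs <;> linarith [hw0 x]
        · rw [if_pos h]
          push_neg at h
          split_ifs with h1 h2 h3
          · linarith [hw0 x]
          · linarith [hw0 x]
          · linarith [hw0 x]
          · exfalso
            rw [hsum2] at h3
            push_neg at h1 h3
            rename' h3 => h2
            rw [hdiff] at h
            have habs : |∑ i, (min (V (x i)) β - ∑ s, Po s * min (V s) β)| < N * ε₁ :=
              abs_lt.2 ⟨by linarith, by linarith⟩
            rw [abs_div, abs_of_nonneg hN0.le] at h
            have := (lt_div_iff₀ hN0).1 h
            linarith
      calc ∑ x : Fin N → S, (if ¬ (|∑ s, empDist x s * min (V s) β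
            - ∑ s, Po s * min (V s) β| ≤ ε₁) then ∏ i, Po (x i) else 0)
          ≤ ∑ x : Fin N → S,
            ((if (N:ℝ) * ε₁ ≤ ∑ i, ((fun s => min (V s) β) (x i)
                - ∑ s, Po s * min (V s) β) then ∏ i, Po (x i) else 0)
            + (if (N:ℝ) * ε₁ ≤ ∑ i, ((fun s => H - min (V s) β) (x i)
                - ∑ s, Po s * (H - min (V s) β)) then ∏ i, Po (x i) else 0)) :=
            Finset.sum_le_sum fun x _ => hpt x
        _ = (∑ x : Fin N → S, (if (N:ℝ) * ε₁ ≤ ∑ i, ((fun s => min (V s) β) (x i)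
                - ∑ s, Po s * min (V s) β) then ∏ i, Po (x i) else 0))
            + ∑ x : Fin N → S, (if (N:ℝ) * ε₁ ≤ ∑ i, ((fun s => H - min (V s) β) (x i)
                - ∑ s, Po s * (H - min (V s) β)) then ∏ i, Po (x i) else 0) :=
            Finset.sum_add_distrib
        _ ≤ Real.exp (-(2 * N * ε₁^2 / H^2)) + Real.exp (-(2 * N * ε₁^2 / H^2)) :=
            add_le_add hch1 hch2
        _ = 2 * (θ * δ / (4 * H)) := by rw [hexp]; ring
    set good : (Fin N → S) → Prop := fun x => ∀ β ∈ G,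
        |∑ s, empDist x s * min (V s) β - ∑ s, Po s * min (V s) β| ≤ ε₁ with hgooddef
    have hGcard : (G.card : ℝ) * θ ≤ 2 * H := by
      have h1 : G.card ≤ K := le_trans Finset.card_image_le (le_of_eq (Finset.card_range K))
      have h3 : (G.card : ℝ) ≤ (K:ℝ) := Nat.cast_le.2 h1
      have h2 : (K:ℝ) < H/(2*θ) + 1 := Nat.ceil_lt_add_one (by positivity)
      have h4 : (K:ℝ)*θ < H/2 + θ := by
        have := mul_lt_mul_of_pos_right h2 hθ0
        calc (K:ℝ)*θ < (H/(2*θ)+1)*θ := this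
          _ = H/2 + θ := by field_simp
      nlinarith
    have hbad : ∑ x : Fin N → S, (if ¬ good x then ∏ i, Po (x i) else 0) ≤ δ := by
      have hpt : ∀ x : Fin N → S, (if ¬ good x then ∏ i, Po (x i) else 0)
          ≤ ∑ β ∈ G, (if ¬ (|∑ s, empDist x s * min (V s) β
              - ∑ s, Po s * min (V s) β| ≤ ε₁) then ∏ i, Po (x i) else 0) := by
        intro x
        have hnn : ∀ β ∈ G, (0:ℝ) ≤ (if ¬ (|∑ s, empDist x s * min (V s) β
            - ∑ s, Po s * min (V s) β| ≤ ε₁) then ∏ i, Po (x i) else 0) := by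
          intro β _
          split_ifs
          · exact le_rfl
          · exact hw0 x
        by_cases h : good x
        · rw [if_neg (not_not_intro h)]
          exact Finset.sum_nonneg hnn
        · rw [if_pos h]
          rw [hgooddef] at h
          simp only [not_forall] at h
          obtain ⟨β, hβG, hβ⟩ := h
          calc (∏ i, Po (x i)) = (if ¬ (|∑ s, empDist x s * min (V s) β
              - ∑ s, Po s * min (V s) β| ≤ ε₁) then ∏ i, Po (x i) else 0) :=
                (if_pos hβ).symm
            _ ≤ _ := Finset.single_le_sum hnn hβG
      calc ∑ x : Fin N → S, (if ¬ good x then ∏ i, Po (x i) else 0)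
          ≤ ∑ x : Fin N → S, ∑ β ∈ G, (if ¬ (|∑ s, empDist x s * min (V s) β
              - ∑ s, Po s * min (V s) β| ≤ ε₁) then ∏ i, Po (x i) else 0) :=
            Finset.sum_le_sum fun x _ => hpt x
        _ = ∑ β ∈ G, ∑ x : Fin N → S, (if ¬ (|∑ s, empDist x s * min (V s) β
              - ∑ s, Po s * min (V s) β| ≤ ε₁) then ∏ i, Po (x i) else 0) :=
            Finset.sum_comm
        _ ≤ ∑ _β ∈ G, 2 * (θ * δ / (4 * H)) :=
            Finset.sum_le_sum fun β hβ => hcher β hβ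
        _ = (G.card : ℝ) * (2 * (θ * δ / (4 * H))) := by
            rw [Finset.sum_const, nsmul_eq_mul]
        _ = ((G.card : ℝ) * θ) * (δ / (2 * H)) := by field_simp; ring
        _ ≤ (2 * H) * (δ / (2 * H)) :=
            mul_le_mul_of_nonneg_right hGcard (by positivity)
        _ = δ := by field_simp
    have hgoodmass : 1 - δ ≤ ∑ x : Fin N → S, (if good x then ∏ i, Po (x i) else 0) := by
      have hsplit : (∑ x : Fin N → S, (if good x then ∏ i, Po (x i) else 0))
          + ∑ x : Fin N → S, (if ¬ good x then ∏ i, Po (x i) else 0) = 1 := by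
        rw [← Finset.sum_add_distrib, ← hwsum]
        apply Finset.sum_congr rfl
        intro x _
        by_cases h : good x
        · rw [if_pos h, if_neg (not_not_intro h), add_zero]
        · rw [if_neg h, if_pos h, zero_add]
      linarith
    have himp : ∀ x : Fin N → S, good x →
        |Lrob {P : S → ℝ | isSimplex P ∧ Dtv P Po ≤ ρ} V -
          Lrob {P : S → ℝ | isSimplex P ∧ Dtv P (empDist x) ≤ ρ} V| ≤ ε₁ + 2 * θ := by
      intro x hgx
      have hemp := empDist_simplex hN x
      have h1 := one_sided V Po (empDist x) hPo hemp ρ θ ε₁ H m M hρ hρ1 hθ0.le hε₁0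
        s₀ rfl hm s₁ rfl hM hm0 hMH G (fun α h0 hH' => hcover α h0 hH')
        (fun β hβ => hgx β hβ)
      have h2 := one_sided V (empDist x) Po hemp hPo ρ θ ε₁ H m M hρ hρ1 hθ0.le hε₁0
        s₀ rfl hm s₁ rfl hM hm0 hMH G (fun α h0 hH' => hcover α h0 hH')
        (fun β hβ => by rw [abs_sub_comm]; exact hgx β hβ)
      rw [abs_le]
      constructor <;> linarith
    calc 1 - δ ≤ ∑ x : Fin N → S, (if good x then ∏ i, Po (x i) else 0) := hgoodmass
      _ ≤ _ := by
        apply Finset.sum_le_sum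
        intro x _
        by_cases hg : good x
        · rw [if_pos hg, if_pos (himp x hg)]
        · rw [if_neg hg]
          split_ifs
          · exact hw0 x
          · exact le_rfl
end

section
/- Fix H ≥ 1, ρ > 0, δ ∈ (0,1), and set C_ρ = √(1+ρ). Let P° ∈ Δ(S), let X₁, …, X_N be i.i.d. samples from P°, and let P̂° be the empirical distribution. Then for any fixed V : S → ℝ with 0 ≤ V(s) ≤ H for all s and any fixed η ∈ [0, C_ρ H/(C_ρ − 1)], with probability at least 1 − δ: | C_ρ √( (1/N) Σ_{i=1}^N (η − V(X_i))² ) − C_ρ √( E_{s'∼P°}[(η − V(s'))²] ) | ≤ ( √2 · C_ρ² H / ((C_ρ − 1)√N) ) · ( √(log(2/δ)) + 1 ). -/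
lemma exp_le_quad {x : ℝ} (h0 : 0 ≤ x) (h1 : x ≤ 1) :
    Real.exp x ≤ 1 + x + (13/18) * x^2 := by
  have h := Real.exp_bound' h0 h1 (n := 3) (by norm_num)
  have hs : ∑ m ∈ Finset.range 3, x ^ m / (Nat.factorial m) = 1 + x + x^2/2 := by
    simp [Finset.sum_range_succ, Nat.factorial]
  rw [hs] at h
  have hx3 : x^3 ≤ x^2 := by nlinarith
  calc Real.exp x ≤ 1 + x + x^2/2 + x^3 * (3+1) / (Nat.factorial 3 * 3) := h
    _ ≤ 1 + x + (13/18) * x^2 := by simp [Nat.factorial]; nlinarith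

lemma exp_neg_le_quad {x : ℝ} (h0 : 0 ≤ x) :
    Real.exp (-x) ≤ 1 - x + x^2/2 := by
  have hder : ∀ y : ℝ, HasDerivAt (fun y => Real.exp y * (1 - y + y^2/2))
      (Real.exp y * (y^2/2)) y := by
    intro y
    have h1 := Real.hasDerivAt_exp y
    have h2 : HasDerivAt (fun y : ℝ => 1 - y + y^2/2) (-1 + 2*y^(2-1)/2) y := by
      exact ((hasDerivAt_id y).const_sub 1).add ((hasDerivAt_pow 2 y).div_const 2)
    have h3 := h1.mul h2
    have : Real.exp y * (1 - y + y ^ 2 / 2) + Real.exp y * (-1 + 2 * y ^ (2 - 1) / 2)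
        = Real.exp y * (y^2/2) := by norm_num; ring
    rwa [this] at h3
  have hmono : Monotone (fun y => Real.exp y * (1 - y + y^2/2)) := by
    apply monotone_of_deriv_nonneg
    · exact fun y => (hder y).differentiableAt
    · intro y
      rw [(hder y).deriv]
      positivity
  have h := hmono h0
  simp only [Real.exp_zero, one_mul] at h
  have hpos := Real.exp_pos x
  have hinv : Real.exp (-x) * Real.exp x = 1 := by
    rw [← Real.exp_add]; simp
  nlinarith [h]

lemma chernoff_tail {S : Type*} [Fintype S] (N : ℕ) (w g : S → ℝ) (hw : ∀ s, 0 ≤ w s)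
    (lam c ψ : ℝ) (hlam : 0 ≤ lam)
    (hmgf : ∑ s, w s * Real.exp (lam * g s) ≤ Real.exp ψ) :
    ∑ x : Fin N → S, (if c ≤ ∑ i, g (x i) then ∏ i, w (x i) else 0)
      ≤ Real.exp ((N : ℝ) * ψ - lam * c) := by
  have key : ∀ x : Fin N → S, (if c ≤ ∑ i, g (x i) then ∏ i, w (x i) else 0)
      ≤ Real.exp (-(lam * c)) * ∏ i, (w (x i) * Real.exp (lam * g (x i))) := by
    intro x
    have hw0 : 0 ≤ ∏ i, w (x i) := Finset.prod_nonneg (fun i _ => hw _)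
    have hre : Real.exp (-(lam * c)) * ∏ i, (w (x i) * Real.exp (lam * g (x i)))
        = (∏ i, w (x i)) * Real.exp (lam * (∑ i, g (x i)) - lam * c) := by
      rw [Finset.prod_mul_distrib, ← Real.exp_sum, ← Finset.mul_sum, sub_eq_add_neg,
        Real.exp_add]
      ring
    rw [hre]
    split
    · rename_i hc
      have : (1 : ℝ) ≤ Real.exp (lam * (∑ i, g (x i)) - lam * c) := by
        rw [Real.one_le_exp_iff]
        have := mul_le_mul_of_nonneg_left hc hlam
        linarith
      nlinarith [Real.exp_pos (lam * (∑ i, g (x i)) - lam * c)]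
    · positivity
  calc ∑ x : Fin N → S, (if c ≤ ∑ i, g (x i) then ∏ i, w (x i) else 0)
      ≤ ∑ x : Fin N → S, Real.exp (-(lam * c)) * ∏ i, (w (x i) * Real.exp (lam * g (x i))) :=
        Finset.sum_le_sum (fun x _ => key x)
    _ = Real.exp (-(lam * c)) * (∑ s, w s * Real.exp (lam * g s)) ^ N := by
        rw [← Finset.mul_sum, Fintype.sum_pow (fun s => w s * Real.exp (lam * g s)) N]
    _ ≤ Real.exp (-(lam * c)) * (Real.exp ψ) ^ N := by
        apply mul_le_mul_of_nonneg_left _ (Real.exp_pos _).le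
        apply pow_le_pow_left₀ _ hmgf
        exact Finset.sum_nonneg (fun s _ => mul_nonneg (hw s) (Real.exp_pos _).le)
    _ = Real.exp ((N : ℝ) * ψ - lam * c) := by
        rw [← Real.exp_nat_mul, ← Real.exp_add]
        ring_nf

lemma mgf_bound_s10 {S : Type*} [Fintype S] (w f : S → ℝ) (hw0 : ∀ s, 0 ≤ w s)
    (hw1 : ∑ s, w s = 1) (B : ℝ) (hB : 0 < B) (hf0 : ∀ s, 0 ≤ f s) (hfB : ∀ s, f s ≤ B)
    (lam : ℝ) :
    ∑ s, w s * Real.exp (lam * f s)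
      ≤ 1 + (∑ s, w s * f s) / B * (Real.exp (lam * B) - 1) := by
  have hpt : ∀ s, Real.exp (lam * f s) ≤ 1 + f s / B * (Real.exp (lam * B) - 1) := by
    intro s
    have hθ0 : 0 ≤ f s / B := div_nonneg (hf0 s) hB.le
    have hθ1 : f s / B ≤ 1 := (div_le_one hB).2 (hfB s)
    have hconv := convexOn_exp.2 (Set.mem_univ (0:ℝ)) (Set.mem_univ (lam * B))
      (by linarith : (0:ℝ) ≤ 1 - f s / B) hθ0 (by ring)
    simp only [smul_eq_mul, mul_zero, zero_add, Real.exp_zero, mul_one] at hconv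
    have harg : f s / B * (lam * B) = lam * f s := by field_simp
    rw [harg] at hconv
    calc Real.exp (lam * f s) ≤ (1 - f s / B) * 1 + f s / B * Real.exp (lam * B) := by
          simpa using hconv
      _ = 1 + f s / B * (Real.exp (lam * B) - 1) := by ring
  calc ∑ s, w s * Real.exp (lam * f s)
      ≤ ∑ s, w s * (1 + f s / B * (Real.exp (lam * B) - 1)) :=
        Finset.sum_le_sum (fun s _ => mul_le_mul_of_nonneg_left (hpt s) (hw0 s))
    _ = ∑ s, (w s + (w s * f s) * ((Real.exp (lam * B) - 1) / B)) := by
        apply Finset.sum_congr rfl; intro s _; ring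
    _ = (∑ s, w s) + (∑ s, w s * f s) * ((Real.exp (lam * B) - 1) / B) := by
        rw [Finset.sum_add_distrib, ← Finset.sum_mul]
    _ = 1 + (∑ s, w s * f s) / B * (Real.exp (lam * B) - 1) := by rw [hw1]; ring
lemma tail_lower {S : Type*} [Fintype S] (N : ℕ) (w f : S → ℝ) (hw0 : ∀ s, 0 ≤ w s)
    (hw1 : ∑ s, w s = 1) (B b L t1 u : ℝ) (hB0 : 0 < B)
    (hf0 : ∀ s, 0 ≤ f s) (hfB : ∀ s, f s ≤ B)
    (hbdef : b = ∑ s, w s * f s) (hb : 0 < b) (hNR : 0 < (N:ℝ))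
    (hL0 : 0 < L) (hu2 : u^2 = B * L / (N:ℝ)) (ht10 : 0 < t1) (ht1sq : t1^2 = 2 * u^2 * b) :
    ∑ x : Fin N → S, (if -((N:ℝ) * (b - t1)) ≤ ∑ i, -(f (x i)) then ∏ i, w (x i) else 0)
      ≤ Real.exp (-L) := by
  have hBne : B ≠ 0 := hB0.ne'
  have hbne : b ≠ 0 := hb.ne'
  have hNne : (N:ℝ) ≠ 0 := hNR.ne'
  set lam1 := t1 / (B * b) with hlam1def
  have hBb0 : 0 < B * b := mul_pos hB0 hb
  have hlam10 : 0 ≤ lam1 := (div_pos ht10 hBb0).le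
  have hmgf1 : ∑ s, w s * Real.exp (lam1 * -(f s))
      ≤ Real.exp (-(lam1 * b) + lam1^2 * B * b / 2) := by
    have hmb := mgf_bound_s10 w f hw0 hw1 B hB0 hf0 hfB (-lam1)
    have hexpb : Real.exp (-lam1 * B) - 1 ≤ -(lam1 * B) + (lam1 * B)^2 / 2 := by
      have hx := exp_neg_le_quad (x := lam1 * B) (mul_nonneg hlam10 hB0.le)
      rw [neg_mul]
      linarith
    have hbBnn : 0 ≤ b / B := div_nonneg hb.le hB0.le
    have hkey : (∑ s, w s * f s) / B * (Real.exp (-lam1 * B) - 1)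
        ≤ -(lam1 * b) + lam1^2 * B * b / 2 := by
      rw [← hbdef]
      calc b / B * (Real.exp (-lam1 * B) - 1)
          ≤ b / B * (-(lam1 * B) + (lam1 * B)^2 / 2) :=
            mul_le_mul_of_nonneg_left hexpb hbBnn
        _ = -(lam1 * b) + lam1^2 * B * b / 2 := by field_simp
    calc ∑ s, w s * Real.exp (lam1 * -(f s))
        = ∑ s, w s * Real.exp (-lam1 * f s) := by
          apply Finset.sum_congr rfl; intro s _; ring_nf
      _ ≤ 1 + (∑ s, w s * f s) / B * (Real.exp (-lam1 * B) - 1) := hmb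
      _ ≤ 1 + (-(lam1 * b) + lam1^2 * B * b / 2) := by linarith
      _ ≤ Real.exp (-(lam1 * b) + lam1^2 * B * b / 2) := by
          linarith [Real.add_one_le_exp (-(lam1 * b) + lam1^2 * B * b / 2)]
  have hch := chernoff_tail N w (fun s => -(f s)) hw0 lam1
    (-((N:ℝ) * (b - t1))) _ hlam10 hmgf1
  refine le_trans hch (le_of_eq ?_)
  have heqA : (N:ℝ) * (-(lam1 * b) + lam1^2 * B * b / 2)
      - lam1 * -((N:ℝ) * (b - t1)) = -((N:ℝ) * t1^2 / (2 * B * b)) := by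
    rw [hlam1def]; field_simp; ring
  have heqB : (N:ℝ) * t1^2 / (2 * B * b) = L := by
    rw [ht1sq]
    have : b * (B * L) = B * b * L := by ring
    field_simp [hu2]
    rw [hu2]; field_simp
  rw [heqA, heqB]

lemma tail_upper {S : Type*} [Fintype S] (N : ℕ) (w f : S → ℝ) (hw0 : ∀ s, 0 ≤ w s)
    (hw1 : ∑ s, w s = 1) (B b L T u : ℝ) (hB0 : 0 < B)
    (hf0 : ∀ s, 0 ≤ f s) (hfB : ∀ s, f s ≤ B)
    (hbdef : b = ∑ s, w s * f s) (hb : 0 < b) (hNR : 0 < (N:ℝ))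
    (hL0 : 0 < L) (hu2 : u^2 = B * L / (N:ℝ)) (hT0 : 0 < T)
    (hT8 : 8 * u^2 * b ≤ T^2) (h2u : 2 * u^2 ≤ T) :
    ∑ x : Fin N → S, (if (N:ℝ) * (b + T) ≤ ∑ i, f (x i) then ∏ i, w (x i) else 0)
      ≤ Real.exp (-L) := by
  have hBne : B ≠ 0 := hB0.ne'
  have hbne : b ≠ 0 := hb.ne'
  have hNne : (N:ℝ) ≠ 0 := hNR.ne'
  have hNuB : (N:ℝ) * u^2 / B = L := by rw [hu2]; field_simp
  obtain ⟨lam, hl0, hlB, hlL⟩ : ∃ lam : ℝ, 0 ≤ lam ∧ lam * B ≤ 1 ∧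
      L ≤ (N:ℝ) * (lam * T - (13/18) * lam^2 * B * b) := by
    by_cases hcase : T ≤ 2 * (13/18) * b
    · have hd0 : (0:ℝ) < 2 * (13/18) * B * b := by
        have := mul_pos hB0 hb; nlinarith
      refine ⟨T / (2 * (13/18) * B * b), (div_pos hT0 hd0).le, ?_, ?_⟩
      · rw [div_mul_eq_mul_div, div_le_one hd0]
        nlinarith [hB0, hcase, hT0]
      · have heq : (T / (2 * (13/18) * B * b)) * T
            - (13/18) * (T / (2 * (13/18) * B * b))^2 * B * b
            = T^2 / (4 * (13/18) * B * b) := by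
          field_simp; ring
        rw [heq]
        have hd4 : (0:ℝ) < 4 * (13/18) * B * b := by nlinarith [mul_pos hB0 hb]
        have h36 : (N:ℝ) * (8 * u^2 * b) / (4 * (13/18) * B * b) = (36/13) * L := by
          rw [← hNuB]; field_simp; ring
        have hmono : (N:ℝ) * (8 * u^2 * b) / (4 * (13/18) * B * b)
            ≤ (N:ℝ) * T^2 / (4 * (13/18) * B * b) := by gcongr
        rw [← mul_div_assoc]
        linarith
    · push_neg at hcase
      refine ⟨1/B, by positivity, by rw [one_div, inv_mul_cancel₀ hB0.ne'], ?_⟩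
      have hrw : (N:ℝ) * ((1/B) * T - (13/18) * (1/B)^2 * B * b)
          = (N:ℝ) * (T - (13/18) * b) / B := by
        field_simp
      rw [hrw]
      have hnum : u^2 ≤ T - (13/18) * b := by linarith
      calc L = (N:ℝ) * u^2 / B := hNuB.symm
        _ ≤ (N:ℝ) * (T - (13/18) * b) / B := by gcongr
  have hmgf2 : ∑ s, w s * Real.exp (lam * f s)
      ≤ Real.exp (lam * b + (13/18) * lam^2 * B * b) := by
    have hmb := mgf_bound_s10 w f hw0 hw1 B hB0 hf0 hfB lam
    have hexpb : Real.exp (lam * B) - 1 ≤ lam * B + (13/18) * (lam * B)^2 := by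
      have := exp_le_quad (x := lam * B) (mul_nonneg hl0 hB0.le) hlB
      linarith
    have hbBnn : 0 ≤ b / B := div_nonneg hb.le hB0.le
    have hkey : (∑ s, w s * f s) / B * (Real.exp (lam * B) - 1)
        ≤ lam * b + (13/18) * lam^2 * B * b := by
      rw [← hbdef]
      calc b / B * (Real.exp (lam * B) - 1)
          ≤ b / B * (lam * B + (13/18) * (lam * B)^2) :=
            mul_le_mul_of_nonneg_left hexpb hbBnn
        _ = lam * b + (13/18) * lam^2 * B * b := by field_simp
    calc ∑ s, w s * Real.exp (lam * f s)
        ≤ 1 + (∑ s, w s * f s) / B * (Real.exp (lam * B) - 1) := hmb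
      _ ≤ 1 + (lam * b + (13/18) * lam^2 * B * b) := by linarith
      _ ≤ Real.exp (lam * b + (13/18) * lam^2 * B * b) := by
          linarith [Real.add_one_le_exp (lam * b + (13/18) * lam^2 * B * b)]
  have hch := chernoff_tail N w f hw0 lam ((N:ℝ) * (b + T)) _ hl0 hmgf2
  refine le_trans hch ?_
  have heqA : (N:ℝ) * (lam * b + (13/18) * lam^2 * B * b) - lam * ((N:ℝ) * (b + T))
      = -((N:ℝ) * (lam * T - (13/18) * lam^2 * B * b)) := by ring
  rw [heqA]
  exact Real.exp_le_exp.2 (by linarith)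

lemma sqrt_dev (Nr A b T t1 u β : ℝ) (hNr : 0 < Nr) (hA0 : 0 ≤ A)
    (hβdef : β = Real.sqrt b) (hb0 : 0 ≤ b) (hu0 : 0 < u)
    (hTdef : T = 2 * Real.sqrt 2 * u * β + 2 * u^2) (ht1def : t1 = Real.sqrt 2 * u * β)
    (h1 : Nr * (b - t1) < A) (h2 : A < Nr * (b + T)) :
    |Real.sqrt (1 / Nr * A) - β| ≤ Real.sqrt 2 * u := by
  have hs2 : Real.sqrt 2 ^ 2 = 2 := Real.sq_sqrt (by norm_num)
  have hs20 : 0 < Real.sqrt 2 := Real.sqrt_pos.2 (by norm_num)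
  have hβ0 : 0 ≤ β := hβdef ▸ Real.sqrt_nonneg _
  have hβ2 : β^2 = b := hβdef ▸ Real.sq_sqrt hb0
  have ha1 : b - t1 < 1 / Nr * A := by
    rw [one_div, ← div_eq_inv_mul]
    exact (lt_div_iff₀ hNr).2 (by linarith)
  have ha2 : 1 / Nr * A < b + T := by
    rw [one_div, ← div_eq_inv_mul]
    exact (div_lt_iff₀ hNr).2 (by linarith)
  have hupper : Real.sqrt (1 / Nr * A) ≤ β + Real.sqrt 2 * u := by
    have hsq : (β + Real.sqrt 2 * u)^2 = b + T := by
      rw [hTdef]; linear_combination hβ2 + u^2 * hs2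
    have hle : 1 / Nr * A ≤ (β + Real.sqrt 2 * u)^2 := by linarith
    calc Real.sqrt (1 / Nr * A) ≤ Real.sqrt ((β + Real.sqrt 2 * u)^2) :=
          Real.sqrt_le_sqrt hle
      _ = β + Real.sqrt 2 * u :=
          Real.sqrt_sq (add_nonneg hβ0 (mul_nonneg hs20.le hu0.le))
  have hlower : β - Real.sqrt 2 * u ≤ Real.sqrt (1 / Nr * A) := by
    rcases le_or_gt β (Real.sqrt 2 * u) with h | h
    · linarith [Real.sqrt_nonneg (1 / Nr * A)]
    · have e1 : (β - Real.sqrt 2 * u)^2 = b - 2 * (Real.sqrt 2 * u * β) + 2 * u^2 := by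
        linear_combination hβ2 + u^2 * hs2
      have h3 : Real.sqrt 2 * u * (Real.sqrt 2 * u) < Real.sqrt 2 * u * β :=
        mul_lt_mul_of_pos_left h (mul_pos hs20 hu0)
      have h4 : Real.sqrt 2 * u * (Real.sqrt 2 * u) = 2 * u^2 := by
        linear_combination u^2 * hs2
      have hge : (β - Real.sqrt 2 * u)^2 ≤ 1 / Nr * A := by
        have ht1e : t1 = Real.sqrt 2 * u * β := ht1def
        linarith
      calc β - Real.sqrt 2 * u = Real.sqrt ((β - Real.sqrt 2 * u)^2) :=
          (Real.sqrt_sq (by linarith)).symm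
        _ ≤ Real.sqrt (1 / Nr * A) := Real.sqrt_le_sqrt hge
  exact abs_le.2 ⟨by linarith, by linarith⟩

lemma T_facts (u β b T : ℝ) (hu0 : 0 < u) (hβ0 : 0 ≤ β) (hβ2 : β^2 = b)
    (hTdef : T = 2 * Real.sqrt 2 * u * β + 2 * u^2) :
    0 < T ∧ 8 * u^2 * b ≤ T^2 ∧ 2 * u^2 ≤ T := by
  have hs2 : Real.sqrt 2 ^ 2 = 2 := Real.sq_sqrt (by norm_num)
  have hs20 : 0 < Real.sqrt 2 := Real.sqrt_pos.2 (by norm_num)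
  have h1 : 0 ≤ 2 * Real.sqrt 2 * u * β := by positivity
  have h2 : 0 < 2 * u^2 := by positivity
  have hexp : T^2 = 8*u^2*b + 8*Real.sqrt 2*u^3*β + 4*u^4 := by
    rw [hTdef]; linear_combination 4*u^2*β^2*hs2 + 8*u^2*hβ2
  have h3 : 0 ≤ 8*Real.sqrt 2*u^3*β := by positivity
  have h4 : 0 ≤ 4*u^4 := by positivity
  exact ⟨by rw [hTdef]; linarith, by linarith, by rw [hTdef]; linarith⟩

open Classical in
theorem stmt10 {S : Type*} [Fintype S] [Nonempty S]
    (H ρ δ : ℝ) (N : ℕ)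
    (hH : 1 ≤ H) (hρ : 0 < ρ) (hδ : δ ∈ Set.Ioo (0:ℝ) 1) (hN : 0 < N)
    (Po : S → ℝ) (hPo : isSimplex Po)
    (V : S → ℝ) (hV : ∀ s, V s ∈ Set.Icc (0:ℝ) H)
    (η : ℝ)
    (hη : η ∈ Set.Icc (0:ℝ) (Real.sqrt (1 + ρ) * H / (Real.sqrt (1 + ρ) - 1))) :
    1 - δ ≤ ∑ x : Fin N → S,
      (if |Real.sqrt (1 + ρ) * Real.sqrt ((1 / (N : ℝ)) * ∑ i, (η - V (x i))^2) -
            Real.sqrt (1 + ρ) * Real.sqrt (∑ s', Po s' * (η - V s')^2)| ≤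
          Real.sqrt 2 * Real.sqrt (1 + ρ)^2 * H /
              ((Real.sqrt (1 + ρ) - 1) * Real.sqrt N) *
            (Real.sqrt (Real.log (2 / δ)) + 1)
        then ∏ i, Po (x i) else 0) := by
  obtain ⟨hδ0, hδ1⟩ := hδ
  obtain ⟨hPo1, hPo2⟩ := hPo
  have hNR : (0:ℝ) < N := Nat.cast_pos.2 hN
  set C := Real.sqrt (1 + ρ) with hCdef
  have hC1 : 1 < C := by
    have : Real.sqrt 1 < Real.sqrt (1 + ρ) := Real.sqrt_lt_sqrt (by norm_num) (by linarith)
    simpa using this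
  have hC0 : 0 < C := by linarith
  have hCm : 0 < C - 1 := by linarith
  have hH0 : 0 < H := by linarith
  set M := C * H / (C - 1) with hMdef
  have hM0 : 0 < M := div_pos (mul_pos hC0 hH0) hCm
  have hHM : H ≤ M := by rw [hMdef, le_div_iff₀ hCm]; nlinarith
  have hη0 : 0 ≤ η := hη.1
  have hηM : η ≤ M := hη.2
  set b := ∑ s', Po s' * (η - V s')^2 with hbdef
  have hb0 : 0 ≤ b := Finset.sum_nonneg fun s _ => mul_nonneg (hPo1 s) (sq_nonneg _)
  set B := M^2 with hBdef
  have hB0 : 0 < B := by rw [hBdef]; exact pow_pos hM0 2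
  have hfB : ∀ s, (η - V s)^2 ≤ B := by
    intro s
    have h1 := (hV s).1
    have h2 := (hV s).2
    rw [hBdef]
    apply sq_le_sq' <;> nlinarith
  set L := Real.log (2 / δ) with hLdef
  have hL0 : 0 < L := by
    rw [hLdef]
    apply Real.log_pos
    rw [lt_div_iff₀ hδ0]; linarith
  set u := M * Real.sqrt (L / N) with hudef
  have hu0 : 0 < u := mul_pos hM0 (Real.sqrt_pos.2 (div_pos hL0 hNR))
  have hu2 : u^2 = B * L / N := by
    rw [hudef, mul_pow, Real.sq_sqrt (div_pos hL0 hNR).le, hBdef]; ring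
  set β := Real.sqrt b with hβdef
  have hβ0 : 0 ≤ β := hβdef ▸ Real.sqrt_nonneg _
  have hβ2 : β^2 = b := hβdef ▸ Real.sq_sqrt hb0
  clear_value C M b B L u β
  have hexpL : Real.exp (-L) = δ / 2 := by
    rw [hLdef, Real.exp_neg, Real.exp_log (by positivity), inv_div]
  have hRHS0 : 0 ≤ Real.sqrt 2 * C^2 * H / ((C - 1) * Real.sqrt N) * (Real.sqrt L + 1) := by
    apply mul_nonneg
    · apply div_nonneg (by positivity)
      exact mul_nonneg hCm.le (Real.sqrt_nonneg _)
    · positivity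
  have hbound : C * (Real.sqrt 2 * u) ≤
      Real.sqrt 2 * C^2 * H / ((C - 1) * Real.sqrt N) * (Real.sqrt L + 1) := by
    have hsN : (0:ℝ) < Real.sqrt N := Real.sqrt_pos.2 hNR
    have hdiv : Real.sqrt (L / N) = Real.sqrt L / Real.sqrt N := Real.sqrt_div hL0.le N
    have heq : C * (Real.sqrt 2 * u) =
        Real.sqrt 2 * C^2 * H / ((C - 1) * Real.sqrt N) * Real.sqrt L := by
      rw [hudef, hdiv, hMdef]
      field_simp
    rw [heq]
    apply mul_le_mul_of_nonneg_left (by linarith)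
    apply div_nonneg (by positivity)
    exact mul_nonneg hCm.le hsN.le
  have hsum1 : ∑ x : Fin N → S, ∏ i, Po (x i) = 1 := by
    rw [← Fintype.sum_pow, hPo2, one_pow]
  by_cases hb : b = 0
  · -- trivial case
    have hbz : ∑ s', Po s' * (η - V s')^2 = 0 := by rw [← hbdef]; exact hb
    have hfz : ∀ s, Po s ≠ 0 → (η - V s)^2 = 0 := by
      intro s hs
      have := (Finset.sum_eq_zero_iff_of_nonneg
        (fun s (_ : s ∈ Finset.univ) => mul_nonneg (hPo1 s) (sq_nonneg (η - V s)))).1 hbz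
          s (Finset.mem_univ s)
      rcases mul_eq_zero.1 this with h | h
      · exact absurd h hs
      · exact h
    have hβz : β = 0 := by rw [hβdef, hb, Real.sqrt_zero]
    have h1 : (1:ℝ) - δ ≤ ∑ x : Fin N → S, ∏ i, Po (x i) := by rw [hsum1]; linarith
    refine le_trans h1 (Finset.sum_le_sum fun x _ => ?_)
    split
    · exact le_rfl
    · rename_i hcond
      have hx : ∏ i, Po (x i) = 0 := by
        by_contra hx
        apply hcond
        have hPos : ∀ i, Po (x i) ≠ 0 := fun i =>
          Finset.prod_ne_zero_iff.1 hx i (Finset.mem_univ i)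
        have hzero : ∑ i, (η - V (x i))^2 = 0 :=
          Finset.sum_eq_zero fun i _ => hfz _ (hPos i)
        rw [hzero, mul_zero, Real.sqrt_zero, hβz, mul_zero]
        simpa using hRHS0
      rw [hx]
  · -- main case
    have hbpos : 0 < b := lt_of_le_of_ne hb0 (Ne.symm hb)
    set T := 2 * Real.sqrt 2 * u * β + 2 * u^2 with hTdef
    set t1 := Real.sqrt 2 * u * β with ht1def
    clear_value T t1
    obtain ⟨hT0, hT8, h2u⟩ := T_facts u β b T hu0 hβ0 hβ2 hTdef
    have ht10 : 0 < t1 := by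
      rw [ht1def]
      exact mul_pos (mul_pos (Real.sqrt_pos.2 (by norm_num)) hu0)
        (by rw [hβdef]; exact Real.sqrt_pos.2 hbpos)
    have ht1sq : t1^2 = 2 * u^2 * b := by
      rw [ht1def]
      have hs2 : Real.sqrt 2 ^ 2 = 2 := Real.sq_sqrt (by norm_num)
      linear_combination u^2 * β^2 * hs2 + 2 * u^2 * hβ2
    have hbdef' : b = ∑ s, Po s * (η - V s)^2 := hbdef
    have tail1 : ∑ x : Fin N → S,
        (if -((N:ℝ) * (b - t1)) ≤ ∑ i, -((η - V (x i))^2) then ∏ i, Po (x i) else 0)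
          ≤ δ / 2 := by
      have h := tail_lower N Po (fun s => (η - V s)^2) hPo1 hPo2 B b L t1 u hB0
        (fun s => sq_nonneg _) hfB hbdef' hbpos hNR hL0 hu2 ht10 ht1sq
      rwa [hexpL] at h
    have tail2 : ∑ x : Fin N → S,
        (if (N:ℝ) * (b + T) ≤ ∑ i, (η - V (x i))^2 then ∏ i, Po (x i) else 0)
          ≤ δ / 2 := by
      have h := tail_upper N Po (fun s => (η - V s)^2) hPo1 hPo2 B b L T u hB0
        (fun s => sq_nonneg _) hfB hbdef' hbpos hNR hL0 hu2 hT0 hT8 h2u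
      rwa [hexpL] at h
    have det : ∀ x : Fin N → S,
        ¬(-((N:ℝ) * (b - t1)) ≤ ∑ i, -((η - V (x i))^2)) →
        ¬((N:ℝ) * (b + T) ≤ ∑ i, (η - V (x i))^2) →
        |C * Real.sqrt ((1 / (N:ℝ)) * ∑ i, (η - V (x i))^2) - C * β| ≤
          Real.sqrt 2 * C^2 * H / ((C - 1) * Real.sqrt N) * (Real.sqrt L + 1) := by
      intro x h1 h2
      push_neg at h1 h2
      rw [show (∑ i, -((η - V (x i))^2)) = -∑ i, (η - V (x i))^2 from
        Finset.sum_neg_distrib _, neg_lt_neg_iff] at h1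
      have habs := sqrt_dev (N:ℝ) (∑ i, (η - V (x i))^2) b T t1 u β hNR
        (Finset.sum_nonneg fun i _ => sq_nonneg _) hβdef hb0 hu0 hTdef ht1def h1 h2
      calc |C * Real.sqrt ((1 / (N:ℝ)) * ∑ i, (η - V (x i))^2) - C * β|
          = C * |Real.sqrt (1 / (N:ℝ) * ∑ i, (η - V (x i))^2) - β| := by
            rw [← mul_sub, abs_mul, abs_of_pos hC0]
        _ ≤ C * (Real.sqrt 2 * u) := mul_le_mul_of_nonneg_left habs hC0.le
        _ ≤ _ := hbound
    -- assembly
    have h1 : (1:ℝ) - δ ≤ ∑ x : Fin N → S,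
        ((∏ i, Po (x i)
          - (if -((N:ℝ) * (b - t1)) ≤ ∑ i, -((η - V (x i))^2) then ∏ i, Po (x i) else 0))
          - (if (N:ℝ) * (b + T) ≤ ∑ i, (η - V (x i))^2 then ∏ i, Po (x i) else 0)) := by
      rw [Finset.sum_sub_distrib, Finset.sum_sub_distrib, hsum1]
      linarith [tail1, tail2]
    refine le_trans h1 (Finset.sum_le_sum fun x _ => ?_)
    have hw0x : 0 ≤ ∏ i, Po (x i) := Finset.prod_nonneg fun i _ => hPo1 _
    have hi1 : 0 ≤ (if -((N:ℝ) * (b - t1)) ≤ ∑ i, -((η - V (x i))^2)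
        then ∏ i, Po (x i) else 0) := by
      split
      · exact hw0x
      · exact le_rfl
    have hi2 : 0 ≤ (if (N:ℝ) * (b + T) ≤ ∑ i, (η - V (x i))^2
        then ∏ i, Po (x i) else 0) := by
      split
      · exact hw0x
      · exact le_rfl
    by_cases hG : |C * Real.sqrt ((1 / (N:ℝ)) * ∑ i, (η - V (x i))^2) - C * β| ≤
        Real.sqrt 2 * C^2 * H / ((C - 1) * Real.sqrt N) * (Real.sqrt L + 1)
    · rw [if_pos hG]
      linarith
    · rw [if_neg hG]
      by_cases hc1 : -((N:ℝ) * (b - t1)) ≤ ∑ i, -((η - V (x i))^2)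
      · rw [if_pos hc1]
        linarith
      · have hc2 : (N:ℝ) * (b + T) ≤ ∑ i, (η - V (x i))^2 := by
          by_contra hc2
          exact hG (det x hc1 hc2)
        rw [if_neg hc1, if_pos hc2]
        linarith
end

section
/- Consider a finite-horizon robust MDP with finite state space S, finite action space A, horizon H, reward functions r_h : S×A → [0,1], and two families of nonempty uncertainty sets 𝒫_{h,s,a} ⊆ Δ(S) (true) and 𝒫̂_{h,s,a} ⊆ Δ(S) (empirical), for h ∈ [H], s ∈ S, a ∈ A. Define: V*_{H+1} = 0 and V*_h(s) = max_a { r_h(s,a) + L_{𝒫_{h,s,a}} V*_{h+1} }; V̂_{H+1} = 0, V̂_h(s) = max_a { r_h(s,a) + L_{𝒫̂_{h,s,a}} V̂_{h+1} }, and π̂_h(s) a maximizer of a ↦ r_h(s,a) + L_{𝒫̂_{h,s,a}} V̂_{h+1}; and the robust value of π̂ under the true sets: V^π̂_{H+1} = 0, V^π̂_h(s) = r_h(s, π̂_h(s)) + L_{𝒫_{h,s,π̂_h(s)}} V^π̂_{h+1}. Then ‖V*₁ − V₁^π̂‖_∞ ≤ 2H · max_{h∈[H], s∈S, a∈A} |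 L_{𝒫_{h,s,a}} V̂_{h+1} − L_{𝒫̂_{h,s,a}} V̂_{h+1} |. -/
/-- Sup norm on functions `S → ℝ`. -/
noncomputable def supNorm {S : Type*} [Fintype S] (f : S → ℝ) : ℝ := ⨆ s, |f s|

section aux

variable {S : Type*} [Fintype S] [Nonempty S]

lemma Lrob_le_aux {U : Set (S → ℝ)} {P : S → ℝ} (hP : P ∈ U)
    (hsim : ∀ P ∈ U, isSimplex P) (V : S → ℝ) :
    Lrob U V ≤ ∑ s, P s * V s := by
  apply csInf_le
  · refine ⟨-(Finset.univ.sup' Finset.univ_nonempty fun s => |V s|), ?_⟩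
    rintro x ⟨Q, hQ, rfl⟩
    set M : ℝ := Finset.univ.sup' Finset.univ_nonempty fun s => |V s| with hM
    have h1 : ∀ s : S, -M ≤ V s := by
      intro s
      have h2 : |V s| ≤ M := Finset.le_sup' (fun s : S => |V s|) (Finset.mem_univ s)
      have h3 := (abs_le.mp h2).1
      linarith
    calc -M = ∑ s, Q s * (-M) := by
            rw [← Finset.sum_mul, (hsim Q hQ).2, one_mul]
      _ ≤ ∑ s, Q s * V s := Finset.sum_le_sum fun s _ =>
            mul_le_mul_of_nonneg_left (h1 s) ((hsim Q hQ).1 s)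
  · exact ⟨P, hP, rfl⟩

lemma le_Lrob_aux {U : Set (S → ℝ)} (hne : U.Nonempty) {V : S → ℝ} {c : ℝ}
    (h : ∀ P ∈ U, c ≤ ∑ s, P s * V s) : c ≤ Lrob U V := by
  obtain ⟨P, hP⟩ := hne
  refine le_csInf ⟨_, P, hP, rfl⟩ ?_
  rintro x ⟨Q, hQ, rfl⟩
  exact h Q hQ

lemma Lrob_lip_one {U : Set (S → ℝ)} (hne : U.Nonempty)
    (hsim : ∀ P ∈ U, isSimplex P) {V W : S → ℝ} {c : ℝ}
    (hc : ∀ s, |V s - W s| ≤ c) : Lrob U V ≤ Lrob U W + c := by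
  have h1 : Lrob U V - c ≤ Lrob U W := by
    refine le_Lrob_aux hne fun P hP => ?_
    have h2 := Lrob_le_aux hP hsim V
    have h3 : ∑ s, P s * V s ≤ ∑ s, P s * W s + c := by
      have e1 : ∑ s, P s * V s - ∑ s, P s * W s = ∑ s, P s * (V s - W s) := by
        rw [← Finset.sum_sub_distrib]
        exact Finset.sum_congr rfl fun s _ => by ring
      have e2 : ∑ s, P s * (V s - W s) ≤ ∑ s, P s * c :=
        Finset.sum_le_sum fun s _ =>
          mul_le_mul_of_nonneg_left (le_of_abs_le (hc s)) ((hsim P hP).1 s)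
      have e3 : ∑ s, P s * c = c := by
        rw [← Finset.sum_mul, (hsim P hP).2, one_mul]
      linarith
    linarith
  linarith

lemma Lrob_lip {U : Set (S → ℝ)} (hne : U.Nonempty)
    (hsim : ∀ P ∈ U, isSimplex P) {V W : S → ℝ} {c : ℝ}
    (hc : ∀ s, |V s - W s| ≤ c) : |Lrob U V - Lrob U W| ≤ c := by
  have h1 := Lrob_lip_one hne hsim hc
  have h2 := Lrob_lip_one hne hsim (V := W) (W := V) fun s => by
    rw [abs_sub_comm]; exact hc s
  rw [abs_sub_le_iff]; constructor <;> linarith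

end aux

theorem stmt15 {S A : Type*} [Fintype S] [Nonempty S] [Fintype A] [Nonempty A]
    (H : ℕ) (hH : 1 ≤ H)
    (r : ℕ → S → A → ℝ) (hr : ∀ h ∈ Finset.Icc 1 H, ∀ s a, r h s a ∈ Set.Icc (0:ℝ) 1)
    (U Uhat : ℕ → S → A → Set (S → ℝ))
    (hU : ∀ h ∈ Finset.Icc 1 H, ∀ s a,
      (U h s a).Nonempty ∧ ∀ P ∈ U h s a, isSimplex P)
    (hUhat : ∀ h ∈ Finset.Icc 1 H, ∀ s a,
      (Uhat h s a).Nonempty ∧ ∀ P ∈ Uhat h s a, isSimplex P)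
    (Vstar Vhat Vpi : ℕ → S → ℝ) (pihat : ℕ → S → A)
    (hVstarTop : ∀ s, Vstar (H + 1) s = 0)
    (hVstarRec : ∀ h ∈ Finset.Icc 1 H, ∀ s, Vstar h s =
      Finset.univ.sup' Finset.univ_nonempty
        (fun a => r h s a + Lrob (U h s a) (Vstar (h + 1))))
    (hVhatTop : ∀ s, Vhat (H + 1) s = 0)
    (hVhatRec : ∀ h ∈ Finset.Icc 1 H, ∀ s, Vhat h s =
      Finset.univ.sup' Finset.univ_nonempty
        (fun a => r h s a + Lrob (Uhat h s a) (Vhat (h + 1))))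
    (hpihat : ∀ h ∈ Finset.Icc 1 H, ∀ s, Vhat h s =
      r h s (pihat h s) + Lrob (Uhat h s (pihat h s)) (Vhat (h + 1)))
    (hVpiTop : ∀ s, Vpi (H + 1) s = 0)
    (hVpiRec : ∀ h ∈ Finset.Icc 1 H, ∀ s, Vpi h s =
      r h s (pihat h s) + Lrob (U h s (pihat h s)) (Vpi (h + 1))) :
    supNorm (fun s => Vstar 1 s - Vpi 1 s) ≤
      2 * (H : ℝ) * (Finset.Icc 1 H).sup' (Finset.nonempty_Icc.mpr hH)
        (fun h => Finset.univ.sup' Finset.univ_nonempty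
          (fun s : S => Finset.univ.sup' Finset.univ_nonempty
            (fun a : A =>
              |Lrob (U h s a) (Vhat (h + 1)) - Lrob (Uhat h s a) (Vhat (h + 1))|))) := by
  set Δ := (Finset.Icc 1 H).sup' (Finset.nonempty_Icc.mpr hH)
        (fun h => Finset.univ.sup' Finset.univ_nonempty
          (fun s : S => Finset.univ.sup' Finset.univ_nonempty
            (fun a : A =>
              |Lrob (U h s a) (Vhat (h + 1)) - Lrob (Uhat h s a) (Vhat (h + 1))|))) with hΔ
  -- pointwise bound on Δ
  have hΔ_bd : ∀ h ∈ Finset.Icc 1 H, ∀ (s : S) (a : A),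
      |Lrob (U h s a) (Vhat (h + 1)) - Lrob (Uhat h s a) (Vhat (h + 1))| ≤ Δ := by
    intro h hh s a
    calc |Lrob (U h s a) (Vhat (h + 1)) - Lrob (Uhat h s a) (Vhat (h + 1))|
        ≤ Finset.univ.sup' Finset.univ_nonempty
            (fun a : A =>
              |Lrob (U h s a) (Vhat (h + 1)) - Lrob (Uhat h s a) (Vhat (h + 1))|) :=
          Finset.le_sup' (fun a : A =>
              |Lrob (U h s a) (Vhat (h + 1)) - Lrob (Uhat h s a) (Vhat (h + 1))|)
            (Finset.mem_univ a)
      _ ≤ Finset.univ.sup' Finset.univ_nonempty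
            (fun s : S => Finset.univ.sup' Finset.univ_nonempty
              (fun a : A =>
                |Lrob (U h s a) (Vhat (h + 1)) - Lrob (Uhat h s a) (Vhat (h + 1))|)) :=
          Finset.le_sup' (fun s : S => Finset.univ.sup' Finset.univ_nonempty
              (fun a : A =>
                |Lrob (U h s a) (Vhat (h + 1)) - Lrob (Uhat h s a) (Vhat (h + 1))|))
            (Finset.mem_univ s)
      _ ≤ Δ := Finset.le_sup'
          (fun h => Finset.univ.sup' Finset.univ_nonempty
            (fun s : S => Finset.univ.sup' Finset.univ_nonempty
              (fun a : A =>
                |Lrob (U h s a) (Vhat (h + 1)) - Lrob (Uhat h s a) (Vhat (h + 1))|))) hh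
  have hΔ0 : 0 ≤ Δ := by
    classical
    obtain ⟨s⟩ := (inferInstance : Nonempty S)
    obtain ⟨a⟩ := (inferInstance : Nonempty A)
    exact le_trans (abs_nonneg _) (hΔ_bd 1 (Finset.mem_Icc.mpr ⟨le_refl 1, hH⟩) s a)
  -- main double induction
  have key : ∀ d : ℕ, d ≤ H → ∀ s : S,
      |Vstar (H + 1 - d) s - Vhat (H + 1 - d) s| ≤ d * Δ ∧
      |Vhat (H + 1 - d) s - Vpi (H + 1 - d) s| ≤ d * Δ := by
    intro d
    induction d with
    | zero =>
      intro _ s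
      simp [hVstarTop, hVhatTop, hVpiTop]
    | succ d ih =>
      intro hd s
      have hd' : d ≤ H := Nat.le_of_succ_le hd
      have hmem : H - d ∈ Finset.Icc 1 H := Finset.mem_Icc.mpr ⟨by omega, by omega⟩
      have e1 : H + 1 - (d + 1) = H - d := by omega
      have e2 : H + 1 - d = (H - d) + 1 := by omega
      set h := H - d with hh
      rw [e1]
      have ihs : ∀ s : S, |Vstar (h + 1) s - Vhat (h + 1) s| ≤ d * Δ ∧
          |Vhat (h + 1) s - Vpi (h + 1) s| ≤ d * Δ := by
        intro s; rw [← e2]; exact ih hd' s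
      constructor
      · -- |Vstar h s - Vhat h s| ≤ (d+1) Δ
        rw [abs_sub_le_iff]
        constructor
        · rw [hVstarRec h hmem s, sub_le_iff_le_add]
          refine Finset.sup'_le _ _ fun a _ => ?_
          have hlip : |Lrob (U h s a) (Vstar (h+1)) - Lrob (U h s a) (Vhat (h+1))| ≤ d * Δ :=
            Lrob_lip (hU h hmem s a).1 (hU h hmem s a).2 fun s' => (ihs s').1
          have hab := abs_le.mp hlip
          have hab2 := abs_le.mp (hΔ_bd h hmem s a)
          have hle : r h s a + Lrob (Uhat h s a) (Vhat (h+1)) ≤ Vhat h s := by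
            rw [hVhatRec h hmem s]
            exact Finset.le_sup' (fun a => r h s a + Lrob (Uhat h s a) (Vhat (h+1)))
              (Finset.mem_univ a)
          push_cast
          linarith [hab.2, hab2.2]
        · rw [hVhatRec h hmem s, sub_le_iff_le_add]
          refine Finset.sup'_le _ _ fun a _ => ?_
          have hlip : |Lrob (U h s a) (Vstar (h+1)) - Lrob (U h s a) (Vhat (h+1))| ≤ d * Δ :=
            Lrob_lip (hU h hmem s a).1 (hU h hmem s a).2 fun s' => (ihs s').1
          have hab := abs_le.mp hlip
          have hab2 := abs_le.mp (hΔ_bd h hmem s a)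
          have hle : r h s a + Lrob (U h s a) (Vstar (h+1)) ≤ Vstar h s := by
            rw [hVstarRec h hmem s]
            exact Finset.le_sup' (fun a => r h s a + Lrob (U h s a) (Vstar (h+1)))
              (Finset.mem_univ a)
          push_cast
          linarith [hab.1, hab2.1]
      · -- |Vhat h s - Vpi h s| ≤ (d+1) Δ
        rw [hpihat h hmem s, hVpiRec h hmem s]
        set a := pihat h s
        have hlip : |Lrob (U h s a) (Vhat (h+1)) - Lrob (U h s a) (Vpi (h+1))| ≤ d * Δ :=
          Lrob_lip (hU h hmem s a).1 (hU h hmem s a).2 fun s' => (ihs s').2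
        have hab := abs_le.mp hlip
        have hab2 := abs_le.mp (hΔ_bd h hmem s a)
        rw [abs_sub_le_iff]
        push_cast
        constructor <;> linarith [hab.1, hab.2, hab2.1, hab2.2]
  have key1 := key H (le_refl H)
  have e3 : H + 1 - H = 1 := by omega
  rw [e3] at key1
  rw [supNorm]
  refine ciSup_le fun s => ?_
  have h1 := (key1 s).1
  have h2 := (key1 s).2
  have := abs_sub_le (Vstar 1 s) (Vhat 1 s) (Vpi 1 s)
  show |Vstar 1 s - Vpi 1 s| ≤ 2 * (H : ℝ) * Δ
  linarith
end
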